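/- arXiv:2003.05309 — 8 statements merged into one kernel-verified Lean document; each statement's English description precedes it below -/
import Mathlib

section
/- Let u, p, q, k : ℝ × ℝ → ℝ be continuous nonnegative functions on [0,∞)². Suppose u(t₁,t₂) ≤ p(t₁,t₂) + q(t₁,t₂)·∫₀^{t₁}∫₀^{t₂} k(s₁,s₂) u(s₁,s₂) ds₂ ds₁ for all t₁,t₂ ≥ 0. Define a = k·p, b = k·q, A(t₁,t₂) = ∫₀^{t₁}∫₀^{t₂} a(s₁,s₂) ds₂ ds₁, and c(t₁,t₂) = ∫₀^{t₂} b(t₁,s₂) ds₂. Then u(t₁,t₂) ≤ p(t₁,t₂) + q(t₁,t₂)·A(t₁,t₂)·exp(∫₀^{t₁} c(s₁,t₂) ds₁) for all t₁,t₂ ≥ 0. -/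
/-!
Fix `t₂` and put `z x = ∫₀^x ∫₀^{t₂} k u`, `c x = ∫₀^{t₂} k(x, ·) q(x, ·)` and
`A = ∫₀^{t₁} ∫₀^{t₂} k p`. Since `k u ≥ 0`, the double integral is monotone in its upper limits,
so on `[0, t₁] × [0, t₂]` the hypothesis gives `k u ≤ k p + k q · z(s₁)`; integrating,
`z ≤ A + ∫₀^x c z` on `[0, t₁]`, and the linear Grönwall inequality yields
`z t₁ ≤ A · exp (∫₀^{t₁} c)`, which is substituted back into `u ≤ p + q z`.
Data that are continuous only on the closed quadrant are first extended to `ℝ²` by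
`f (max x 0) (max y 0)`, which changes none of the integrals involved.
-/

open intervalIntegral Set Real Function

theorem le_mul_exp_integral_of_le_add_integral {c w : ℝ → ℝ} {a T B : ℝ} (haT : a ≤ T)
    (hc : Continuous c) (hw : Continuous w) (hc0 : ∀ t ∈ Icc a T, 0 ≤ c t)
    (h : ∀ t ∈ Icc a T, w t ≤ B + ∫ s in a..t, c s * w s) :
    w T ≤ B * exp (∫ s in a..T, c s) := by
  set R := fun t => ∫ s in a..t, c s * w s
  set C := fun t => ∫ s in a..t, c s
  have hR t : HasDerivAt R (c t * w t) t := ((hc.mul hw).integral_hasStrictDerivAt a t).hasDerivAt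
  have hC t : HasDerivAt C (c t) t := (hc.integral_hasStrictDerivAt a t).hasDerivAt
  -- `(B + R) e^{-C}` is antitone because its derivative is `c (w - (B + R)) e^{-C} ≤ 0`.
  set g := fun t => (B + R t) * exp (-C t)
  have hg t : HasDerivAt g (c t * (w t - (B + R t)) * exp (-C t)) t :=
    (((hR t).const_add B).mul (hC t).fun_neg.exp).congr_deriv (by ring)
  have hg_anti : AntitoneOn g (Icc a T) := by
    refine antitoneOn_of_deriv_nonpos (convex_Icc a T)
      (continuous_iff_continuousAt.2 fun t => (hg t).continuousAt).continuousOn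
      (fun t _ => (hg t).differentiableAt.differentiableWithinAt) fun t ht => ?_
    have ht' := interior_subset ht
    rw [(hg t).deriv]
    exact mul_nonpos_of_nonpos_of_nonneg
      (mul_nonpos_of_nonneg_of_nonpos (hc0 t ht') (by linarith [h t ht'])) (exp_pos _).le
  have hgT : g T ≤ B := by
    simpa [g, R, C] using hg_anti (left_mem_Icc.2 haT) (right_mem_Icc.2 haT) haT
  calc w T ≤ B + R T := h T (right_mem_Icc.2 haT)
    _ = g T * exp (C T) := by simp [g, mul_assoc, ← exp_add]
    _ ≤ B * exp (C T) := by gcongr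

section IteratedIntegral

variable {f g : ℝ → ℝ → ℝ} {a b x y : ℝ}

theorem integral_integral_mono_on (hax : a ≤ x) (hby : b ≤ y) (hf : Continuous (uncurry f))
    (hg : Continuous (uncurry g)) (hfg : ∀ s ∈ Icc a x, ∀ t ∈ Icc b y, f s t ≤ g s t) :
    ∫ s in a..x, ∫ t in b..y, f s t ≤ ∫ s in a..x, ∫ t in b..y, g s t :=
  integral_mono_on hax
    ((continuous_parametric_intervalIntegral_of_continuous' hf b y).intervalIntegrable _ _)
    ((continuous_parametric_intervalIntegral_of_continuous' hg b y).intervalIntegrable _ _)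
    fun s hs => integral_mono_on hby ((hf.uncurry_left s).intervalIntegrable _ _)
      ((hg.uncurry_left s).intervalIntegrable _ _) (hfg s hs)

theorem integral_integral_mono_interval {x' y' : ℝ} (hax : a ≤ x) (hxx' : x ≤ x') (hby : b ≤ y)
    (hyy' : y ≤ y') (hf : Continuous (uncurry f))
    (hf0 : ∀ s ∈ Icc a x', ∀ t ∈ Icc b y', 0 ≤ f s t) :
    ∫ s in a..x, ∫ t in b..y, f s t ≤ ∫ s in a..x', ∫ t in b..y', f s t := by
  have hF : Continuous fun s => ∫ t in b..y', f s t :=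
    continuous_parametric_intervalIntegral_of_continuous' hf b y'
  calc ∫ s in a..x, ∫ t in b..y, f s t ≤ ∫ s in a..x, ∫ t in b..y', f s t :=
        integral_mono_on hax
          ((continuous_parametric_intervalIntegral_of_continuous' hf b y).intervalIntegrable _ _)
          (hF.intervalIntegrable _ _) fun s hs =>
            integral_mono_interval le_rfl hby hyy'
              (MeasureTheory.ae_restrict_of_forall_mem measurableSet_Ioc fun t ht =>
                hf0 s ⟨hs.1, hs.2.trans hxx'⟩ t (Ioc_subset_Icc_self ht))
              ((hf.uncurry_left s).intervalIntegrable _ _)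
    _ ≤ ∫ s in a..x', ∫ t in b..y', f s t :=
        integral_mono_interval le_rfl hax hxx'
          (MeasureTheory.ae_restrict_of_forall_mem measurableSet_Ioc fun s hs =>
            integral_nonneg (hby.trans hyy') (hf0 s (Ioc_subset_Icc_self hs)))
          (hF.intervalIntegrable _ _)

theorem integral_integral_add_mul {w : ℝ → ℝ} (hf : Continuous (uncurry f))
    (hg : Continuous (uncurry g)) (hw : Continuous w) :
    ∫ s in a..x, ∫ t in b..y, (f s t + g s t * w s) =
      (∫ s in a..x, ∫ t in b..y, f s t) + ∫ s in a..x, (∫ t in b..y, g s t) * w s := by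
  have hsplit s : ∫ t in b..y, (f s t + g s t * w s) =
      (∫ t in b..y, f s t) + (∫ t in b..y, g s t) * w s := by
    rw [integral_add ((hf.uncurry_left s).intervalIntegrable _ _)
      (((hg.uncurry_left s).mul_const (w s)).intervalIntegrable _ _),
      integral_mul_const]
  simp only [hsplit]
  exact integral_add
    ((continuous_parametric_intervalIntegral_of_continuous' hf b y).intervalIntegrable _ _)
    (((continuous_parametric_intervalIntegral_of_continuous' hg b y).mul hw).intervalIntegrable _ _)

end IteratedIntegral

theorem pachpatte_of_continuous {u p q k : ℝ → ℝ → ℝ} (hu : Continuous (uncurry u))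
    (hp : Continuous (uncurry p)) (hq : Continuous (uncurry q)) (hk : Continuous (uncurry k))
    (hu0 : ∀ x y, 0 ≤ x → 0 ≤ y → 0 ≤ u x y) (hp0 : ∀ x y, 0 ≤ x → 0 ≤ y → 0 ≤ p x y)
    (hq0 : ∀ x y, 0 ≤ x → 0 ≤ y → 0 ≤ q x y) (hk0 : ∀ x y, 0 ≤ x → 0 ≤ y → 0 ≤ k x y)
    (hineq : ∀ x y, 0 ≤ x → 0 ≤ y →
      u x y ≤ p x y + q x y * ∫ s₁ in 0..x, ∫ s₂ in 0..y, k s₁ s₂ * u s₁ s₂)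
    {t₁ t₂ : ℝ} (ht₁ : 0 ≤ t₁) (ht₂ : 0 ≤ t₂) :
    u t₁ t₂ ≤ p t₁ t₂ + q t₁ t₂ * (∫ s₁ in 0..t₁, ∫ s₂ in 0..t₂, k s₁ s₂ * p s₁ s₂) *
      exp (∫ s₁ in 0..t₁, ∫ s₂ in 0..t₂, k s₁ s₂ * q s₁ s₂) := by
  set z : ℝ → ℝ := fun x => ∫ s₁ in 0..x, ∫ s₂ in 0..t₂, k s₁ s₂ * u s₁ s₂
  set c : ℝ → ℝ := fun x => ∫ y in 0..t₂, k x y * q x y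
  set A := ∫ s₁ in 0..t₁, ∫ s₂ in 0..t₂, k s₁ s₂ * p s₁ s₂
  have hc : Continuous c := continuous_parametric_intervalIntegral_of_continuous' (hk.mul hq) 0 t₂
  have hz : Continuous z := continuous_primitive (fun _ _ =>
    (continuous_parametric_intervalIntegral_of_continuous' (hk.mul hu) 0 t₂).intervalIntegrable
      _ _) 0
  have hc0 : ∀ x ∈ Icc 0 t₁, 0 ≤ c x := fun x hx =>
    integral_nonneg ht₂ fun y hy => mul_nonneg (hk0 x y hx.1 hy.1) (hq0 x y hx.1 hy.1)
  -- Bounding `z` at `(x, y)` by its value at `(x, t₂)` decouples the second variable.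
  have hbound : ∀ x ∈ Icc 0 t₁, ∀ y ∈ Icc 0 t₂,
      k x y * u x y ≤ k x y * p x y + k x y * q x y * z x := by
    intro x hx y hy
    have hz_mono : ∫ s₁ in 0..x, ∫ s₂ in 0..y, k s₁ s₂ * u s₁ s₂ ≤ z x :=
      integral_integral_mono_interval hx.1 le_rfl hy.1 hy.2 (hk.mul hu) fun s hs t ht =>
        mul_nonneg (hk0 s t hs.1 ht.1) (hu0 s t hs.1 ht.1)
    calc k x y * u x y
        ≤ k x y * (p x y + q x y * ∫ s₁ in 0..x, ∫ s₂ in 0..y, k s₁ s₂ * u s₁ s₂) :=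
          mul_le_mul_of_nonneg_left (hineq x y hx.1 hy.1) (hk0 x y hx.1 hy.1)
      _ ≤ k x y * (p x y + q x y * z x) := by
          gcongr
          · exact hk0 x y hx.1 hy.1
          · exact hq0 x y hx.1 hy.1
      _ = k x y * p x y + k x y * q x y * z x := by ring
  have hz_le : ∀ r ∈ Icc 0 t₁, z r ≤ A + ∫ x in 0..r, c x * z x := fun r hr =>
    calc z r ≤ ∫ x in 0..r, ∫ y in 0..t₂, (k x y * p x y + k x y * q x y * z x) :=
          integral_integral_mono_on hr.1 ht₂ (hk.mul hu)
            ((hk.mul hp).add ((hk.mul hq).mul (hz.comp continuous_fst)))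
            fun x hx => hbound x ⟨hx.1, hx.2.trans hr.2⟩
      _ = (∫ x in 0..r, ∫ y in 0..t₂, k x y * p x y) + ∫ x in 0..r, c x * z x :=
          integral_integral_add_mul (hk.mul hp) (hk.mul hq) hz
      _ ≤ A + ∫ x in 0..r, c x * z x := by
          gcongr
          exact integral_integral_mono_interval hr.1 hr.2 ht₂ le_rfl (hk.mul hp)
            fun s hs t ht => mul_nonneg (hk0 s t hs.1 ht.1) (hp0 s t hs.1 ht.1)
  calc u t₁ t₂ ≤ p t₁ t₂ + q t₁ t₂ * z t₁ := hineq t₁ t₂ ht₁ ht₂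
    _ ≤ p t₁ t₂ + q t₁ t₂ * (A * exp (∫ x in 0..t₁, c x)) := by
        gcongr
        · exact hq0 t₁ t₂ ht₁ ht₂
        · exact le_mul_exp_integral_of_le_add_integral ht₁ hc hz hc0 hz_le
    _ = p t₁ t₂ + q t₁ t₂ * A * exp (∫ x in 0..t₁, c x) := by ring

section QuadrantExtension

variable {f g : ℝ → ℝ → ℝ} {x y : ℝ}

def quadrantExtension (f : ℝ → ℝ → ℝ) (x y : ℝ) : ℝ := f (max x 0) (max y 0)

theorem quadrantExtension_of_nonneg (hx : 0 ≤ x) (hy : 0 ≤ y) :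
    quadrantExtension f x y = f x y := by
  rw [quadrantExtension, max_eq_left hx, max_eq_left hy]

theorem continuous_quadrantExtension (hf : ContinuousOn (uncurry f) (Ici 0 ×ˢ Ici 0)) :
    Continuous (uncurry (quadrantExtension f)) :=
  hf.comp_continuous ((continuous_fst.max continuous_const).prodMk
    (continuous_snd.max continuous_const)) fun z => ⟨le_max_right z.1 0, le_max_right z.2 0⟩

theorem integral_integral_quadrantExtension_mul (hx : 0 ≤ x) (hy : 0 ≤ y) :
    ∫ s₁ in 0..x, ∫ s₂ in 0..y, quadrantExtension f s₁ s₂ * quadrantExtension g s₁ s₂ =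
      ∫ s₁ in 0..x, ∫ s₂ in 0..y, f s₁ s₂ * g s₁ s₂ := by
  refine integral_congr fun s₁ hs₁ => integral_congr fun s₂ hs₂ => ?_
  rw [uIcc_of_le hx] at hs₁
  rw [uIcc_of_le hy] at hs₂
  simp only [quadrantExtension_of_nonneg hs₁.1 hs₂.1]

end QuadrantExtension

theorem pachpatte_separable_kernel_real
    (u p q k : ℝ → ℝ → ℝ)
    (hu : ContinuousOn (fun z : ℝ × ℝ => u z.1 z.2) (Ici 0 ×ˢ Ici 0))
    (hp : ContinuousOn (fun z : ℝ × ℝ => p z.1 z.2) (Ici 0 ×ˢ Ici 0))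
    (hq : ContinuousOn (fun z : ℝ × ℝ => q z.1 z.2) (Ici 0 ×ˢ Ici 0))
    (hk : ContinuousOn (fun z : ℝ × ℝ => k z.1 z.2) (Ici 0 ×ˢ Ici 0))
    (hu0 : ∀ t₁ t₂ : ℝ, 0 ≤ t₁ → 0 ≤ t₂ → 0 ≤ u t₁ t₂)
    (hp0 : ∀ t₁ t₂ : ℝ, 0 ≤ t₁ → 0 ≤ t₂ → 0 ≤ p t₁ t₂)
    (hq0 : ∀ t₁ t₂ : ℝ, 0 ≤ t₁ → 0 ≤ t₂ → 0 ≤ q t₁ t₂)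
    (hk0 : ∀ t₁ t₂ : ℝ, 0 ≤ t₁ → 0 ≤ t₂ → 0 ≤ k t₁ t₂)
    (hineq : ∀ t₁ t₂ : ℝ, 0 ≤ t₁ → 0 ≤ t₂ →
      u t₁ t₂ ≤ p t₁ t₂ + q t₁ t₂ *
        ∫ s₁ in (0:ℝ)..t₁, ∫ s₂ in (0:ℝ)..t₂, k s₁ s₂ * u s₁ s₂) :
    ∀ t₁ t₂ : ℝ, 0 ≤ t₁ → 0 ≤ t₂ →
      u t₁ t₂ ≤ p t₁ t₂ + q t₁ t₂ *
        (∫ s₁ in (0:ℝ)..t₁, ∫ s₂ in (0:ℝ)..t₂, k s₁ s₂ * p s₁ s₂) *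
        Real.exp (∫ s₁ in (0:ℝ)..t₁, ∫ s₂ in (0:ℝ)..t₂, k s₁ s₂ * q s₁ s₂) := by
  intro t₁ t₂ ht₁ ht₂
  have hext := @pachpatte_of_continuous (quadrantExtension u) (quadrantExtension p)
    (quadrantExtension q) (quadrantExtension k) (continuous_quadrantExtension hu)
    (continuous_quadrantExtension hp) (continuous_quadrantExtension hq)
    (continuous_quadrantExtension hk)
    (fun x y hx hy => quadrantExtension_of_nonneg hx hy ▸ hu0 x y hx hy)
    (fun x y hx hy => quadrantExtension_of_nonneg hx hy ▸ hp0 x y hx hy)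
    (fun x y hx hy => quadrantExtension_of_nonneg hx hy ▸ hq0 x y hx hy)
    (fun x y hx hy => quadrantExtension_of_nonneg hx hy ▸ hk0 x y hx hy)
    (fun x y hx hy => by
      simpa only [quadrantExtension_of_nonneg hx hy, integral_integral_quadrantExtension_mul hx hy]
        using hineq x y hx hy)
    t₁ t₂ ht₁ ht₂
  simpa only [quadrantExtension_of_nonneg ht₁ ht₂, integral_integral_quadrantExtension_mul ht₁ ht₂]
    using hext
end

section
/- Let u, p, q, k : ℕ × ℕ → ℝ be nonnegative functions. Suppose u(m,n) ≤ p(m,n) + q(m,n)·∑_{i=0}^{m-1}∑_{j=0}^{n-1} k(i,j) u(i,j) for all m,n ∈ ℕ. Define a(m,n) = k(m,n)·p(m,n), b(m,n) = k(m,n)·q(m,n), A(m,n) = ∑_{i=0}^{m-1}∑_{j=0}^{n-1} a(i,j), and c(m,n) = ∑_{j=0}^{n-1} b(m,j). Then u(m,n) ≤ p(m,n) + q(m,n)·A(m,n)·∏_{i=0}^{m-1} (1 + c(i,n)) for all m,n ∈ ℕ. -/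
theorem pachpatte_separable_kernel_discrete
    (u p q k : ℕ → ℕ → ℝ)
    (hu0 : ∀ m n, 0 ≤ u m n) (hp0 : ∀ m n, 0 ≤ p m n)
    (hq0 : ∀ m n, 0 ≤ q m n) (hk0 : ∀ m n, 0 ≤ k m n)
    (hineq : ∀ m n : ℕ, u m n ≤ p m n + q m n *
      ∑ i ∈ Finset.range m, ∑ j ∈ Finset.range n, k i j * u i j) :
    ∀ m n : ℕ, u m n ≤ p m n + q m n *
      (∑ i ∈ Finset.range m, ∑ j ∈ Finset.range n, k i j * p i j) *
      ∏ i ∈ Finset.range m, (1 + ∑ j ∈ Finset.range n, k i j * q i j) := by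
  intro m n
  set V : ℕ → ℕ → ℝ := fun m n => ∑ i ∈ Finset.range m, ∑ j ∈ Finset.range n, k i j * u i j
    with hVdef
  have hV0 : ∀ m n, 0 ≤ V m n := by
    intro m n
    apply Finset.sum_nonneg; intro i _
    apply Finset.sum_nonneg; intro j _
    exact mul_nonneg (hk0 i j) (hu0 i j)
  have hVmono : ∀ m j, j ≤ n → V m j ≤ V m n := by
    intro m j hj
    apply Finset.sum_le_sum; intro i _
    apply Finset.sum_le_sum_of_subset_of_nonneg (Finset.range_subset_range.mpr hj)
    intro x _ _; exact mul_nonneg (hk0 i x) (hu0 i x)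
  have hc0 : ∀ i, 0 ≤ ∑ j ∈ Finset.range n, k i j * q i j := by
    intro i; apply Finset.sum_nonneg; intro j _
    exact mul_nonneg (hk0 i j) (hq0 i j)
  have hα0 : ∀ i, 0 ≤ ∑ j ∈ Finset.range n, k i j * p i j := by
    intro i; apply Finset.sum_nonneg; intro j _
    exact mul_nonneg (hk0 i j) (hp0 i j)
  have key : ∀ m, V m n ≤
      (∑ i ∈ Finset.range m, ∑ j ∈ Finset.range n, k i j * p i j) *
      ∏ i ∈ Finset.range m, (1 + ∑ j ∈ Finset.range n, k i j * q i j) := by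
    intro m
    induction m with
    | zero => simp [hVdef]
    | succ m ih =>
      have hP1 : (1:ℝ) ≤ ∏ i ∈ Finset.range m, (1 + ∑ j ∈ Finset.range n, k i j * q i j) := by
        calc (1:ℝ) = ∏ _i ∈ Finset.range m, (1:ℝ) := by simp
          _ ≤ _ := Finset.prod_le_prod (by intros; norm_num)
            (fun i _ => by linarith [hc0 i])
      have hA0 : 0 ≤ ∑ i ∈ Finset.range m, ∑ j ∈ Finset.range n, k i j * p i j := by
        apply Finset.sum_nonneg; intro i _; exact hα0 i
      have hstep : V (m+1) n ≤ V m n +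
          (∑ j ∈ Finset.range n, k m j * p m j) +
          (∑ j ∈ Finset.range n, k m j * q m j) * V m n := by
        have h1 : V (m+1) n = V m n + ∑ j ∈ Finset.range n, k m j * u m j := by
          simp [hVdef, Finset.sum_range_succ]
        rw [h1]
        have h2 : ∑ j ∈ Finset.range n, k m j * u m j ≤
            ∑ j ∈ Finset.range n, k m j * (p m j + q m j * V m n) := by
          apply Finset.sum_le_sum; intro j hj
          apply mul_le_mul_of_nonneg_left _ (hk0 m j)
          have h3 : u m j ≤ p m j + q m j * V m j := hineq m j
          have h4 : q m j * V m j ≤ q m j * V m n :=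
            mul_le_mul_of_nonneg_left (hVmono m j (le_of_lt (Finset.mem_range.mp hj)))
              (hq0 m j)
          linarith
        have h5 : ∑ j ∈ Finset.range n, k m j * (p m j + q m j * V m n) =
            (∑ j ∈ Finset.range n, k m j * p m j) +
            (∑ j ∈ Finset.range n, k m j * q m j) * V m n := by
          rw [Finset.sum_mul, ← Finset.sum_add_distrib]
          congr 1; ext j; ring
        linarith [h2, h5.le, h5.ge]
      rw [Finset.sum_range_succ, Finset.prod_range_succ]
      set A := ∑ i ∈ Finset.range m, ∑ j ∈ Finset.range n, k i j * p i j
      set P := ∏ i ∈ Finset.range m, (1 + ∑ j ∈ Finset.range n, k i j * q i j)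
      set α := ∑ j ∈ Finset.range n, k m j * p m j
      set c := ∑ j ∈ Finset.range n, k m j * q m j
      have h6 : (1 + c) * V m n ≤ (1 + c) * (A * P) :=
        mul_le_mul_of_nonneg_left ih (by linarith [hc0 m])
      nlinarith [hα0 m, hc0 m, hV0 m n, mul_nonneg (hα0 m) (hc0 m),
        mul_nonneg (mul_nonneg (hα0 m) (hc0 m)) (sub_nonneg.mpr hP1),
        mul_nonneg (hα0 m) (sub_nonneg.mpr hP1)]
  have h := hineq m n
  have h2 : q m n * V m n ≤ q m n *
      ((∑ i ∈ Finset.range m, ∑ j ∈ Finset.range n, k i j * p i j) *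
      ∏ i ∈ Finset.range m, (1 + ∑ j ∈ Finset.range n, k i j * q i j)) :=
    mul_le_mul_of_nonneg_left (key m) (hq0 m n)
  calc u m n ≤ p m n + q m n * V m n := h
    _ ≤ _ := by rw [mul_assoc]; linarith
end

section
/- Let c₁, c₂ ≥ 0 and let u, v, h₁, h₂, h₃, h₄ : ℝ × ℝ → ℝ be continuous nonnegative functions on [0,∞)². Suppose for all t₁,t₂ ≥ 0: u(t₁,t₂) ≤ c₁ + ∫₀^{t₁}∫₀^{t₂} (h₁ u + h₂ v)(s₁,s₂) ds₂ ds₁ and v(t₁,t₂) ≤ c₂ + ∫₀^{t₁}∫₀^{t₂} (h₃ u + h₄ v)(s₁,s₂) ds₂ ds₁. Let c₃ = c₁ + c₂, H(t₁,t₂) = max(h₁+h₃, h₂+h₄)(t₁,t₂), A(t₁,t₂) = c₃·∫₀^{t₁}∫₀^{t₂} H ds₂ ds₁, and c(t₁,t₂) = ∫₀^{t₂} H(t₁,s₂) ds₂. Then u(t₁,t₂) + v(t₁,t₂) ≤ c₃ + A(t₁,t₂)·exp(∫₀^{t₁} c(s₁,t₂) ds₁) for all t₁,t₂ ≥ 0.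 -/
/-!
Adding the two inequalities and bounding `h₁ + h₃` and `h₂ + h₄` by `H` gives the scalar
inequality `w ≤ c₃ + ∫∫ H w` for `w = u + v`. For fixed `t₂`, the function
`φ t₁ = c₃ + ∫₀^{t₁} ∫₀^{t₂} H w` dominates `w t₁ s₂` for every `s₂ ≤ t₂`, because the integrand
is nonnegative; hence `φ' ≤ (∫₀^{t₂} H) φ`, and Gronwall's inequality in `t₁` yields
`w ≤ c₃ exp (∫∫ H)`. The stated bound follows from `exp B ≤ 1 + B exp B`.
-/

open intervalIntegral Set

open MeasureTheory (volume)

section Quadrant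

variable {f g k : ℝ → ℝ → ℝ}

theorem continuousOn_slice_of_continuousOn_quadrant
    (hf : ContinuousOn (fun z : ℝ × ℝ => f z.1 z.2) (Ici 0 ×ˢ Ici 0)) {x : ℝ} (hx : 0 ≤ x) :
    ContinuousOn (f x) (Ici 0) :=
  hf.comp (continuousOn_const.prodMk continuousOn_id) fun _ hy => ⟨hx, hy⟩

theorem intervalIntegrable_slice_of_continuousOn_quadrant
    (hf : ContinuousOn (fun z : ℝ × ℝ => f z.1 z.2) (Ici 0 ×ˢ Ici 0)) {x b : ℝ}
    (hx : 0 ≤ x) (hb : 0 ≤ b) : IntervalIntegrable (f x) volume 0 b :=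
  ((continuousOn_slice_of_continuousOn_quadrant hf hx).mono fun _ hy =>
    (uIcc_of_le hb ▸ hy).1).intervalIntegrable

theorem continuousOn_integral_slice_of_continuousOn_quadrant
    (hf : ContinuousOn (fun z : ℝ × ℝ => f z.1 z.2) (Ici 0 ×ˢ Ici 0)) {b : ℝ} (hb : 0 ≤ b) :
    ContinuousOn (fun x => ∫ y in (0:ℝ)..b, f x y) (Ici 0) := by
  -- On the quadrant `f` agrees with the globally continuous `f (max x 0) (max y 0)`.
  have hext : Continuous fun z : ℝ × ℝ => f (max z.1 0) (max z.2 0) :=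
    continuousOn_univ.1 <| hf.comp ((continuous_fst.max continuous_const).prodMk
      (continuous_snd.max continuous_const)).continuousOn
      fun z _ => ⟨le_max_right z.1 0, le_max_right z.2 0⟩
  refine (continuous_parametric_intervalIntegral_of_continuous'
    (f := fun x y => f (max x 0) (max y 0)) (μ := volume) hext 0 b).continuousOn.congr
    fun x hx => ?_
  refine integral_congr fun y hy => ?_
  rw [uIcc_of_le hb] at hy
  simp only [max_eq_left (show 0 ≤ x from hx), max_eq_left hy.1]

theorem intervalIntegrable_integral_slice_of_continuousOn_quadrant
    (hf : ContinuousOn (fun z : ℝ × ℝ => f z.1 z.2) (Ici 0 ×ˢ Ici 0)) {a b : ℝ}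
    (ha : 0 ≤ a) (hb : 0 ≤ b) :
    IntervalIntegrable (fun x => ∫ y in (0:ℝ)..b, f x y) volume 0 a :=
  ((continuousOn_integral_slice_of_continuousOn_quadrant hf hb).mono fun _ hx =>
    (uIcc_of_le ha ▸ hx).1).intervalIntegrable

theorem integral_integral_add_of_continuousOn_quadrant
    (hf : ContinuousOn (fun z : ℝ × ℝ => f z.1 z.2) (Ici 0 ×ˢ Ici 0))
    (hg : ContinuousOn (fun z : ℝ × ℝ => g z.1 z.2) (Ici 0 ×ˢ Ici 0)) {a b : ℝ}
    (ha : 0 ≤ a) (hb : 0 ≤ b) :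
    ∫ x in (0:ℝ)..a, ∫ y in (0:ℝ)..b, (f x y + g x y) =
      (∫ x in (0:ℝ)..a, ∫ y in (0:ℝ)..b, f x y) + ∫ x in (0:ℝ)..a, ∫ y in (0:ℝ)..b, g x y := by
  rw [← integral_add (intervalIntegrable_integral_slice_of_continuousOn_quadrant hf ha hb)
    (intervalIntegrable_integral_slice_of_continuousOn_quadrant hg ha hb)]
  refine integral_congr fun x hx => integral_add ?_ ?_
  · exact intervalIntegrable_slice_of_continuousOn_quadrant hf (uIcc_of_le ha ▸ hx).1 hb
  · exact intervalIntegrable_slice_of_continuousOn_quadrant hg (uIcc_of_le ha ▸ hx).1 hb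

theorem integral_integral_mono_of_continuousOn_quadrant
    (hf : ContinuousOn (fun z : ℝ × ℝ => f z.1 z.2) (Ici 0 ×ˢ Ici 0))
    (hg : ContinuousOn (fun z : ℝ × ℝ => g z.1 z.2) (Ici 0 ×ˢ Ici 0)) {a b : ℝ}
    (ha : 0 ≤ a) (hb : 0 ≤ b) (hfg : ∀ x y, 0 ≤ x → 0 ≤ y → f x y ≤ g x y) :
    ∫ x in (0:ℝ)..a, ∫ y in (0:ℝ)..b, f x y ≤ ∫ x in (0:ℝ)..a, ∫ y in (0:ℝ)..b, g x y :=
  integral_mono_on ha (intervalIntegrable_integral_slice_of_continuousOn_quadrant hf ha hb)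
    (intervalIntegrable_integral_slice_of_continuousOn_quadrant hg ha hb) fun x hx =>
    integral_mono_on hb (intervalIntegrable_slice_of_continuousOn_quadrant hf hx.1 hb)
      (intervalIntegrable_slice_of_continuousOn_quadrant hg hx.1 hb) fun y hy =>
      hfg x y hx.1 hy.1

theorem integral_integral_add_le_of_continuousOn_quadrant
    (hf : ContinuousOn (fun z : ℝ × ℝ => f z.1 z.2) (Ici 0 ×ˢ Ici 0))
    (hg : ContinuousOn (fun z : ℝ × ℝ => g z.1 z.2) (Ici 0 ×ˢ Ici 0))
    (hk : ContinuousOn (fun z : ℝ × ℝ => k z.1 z.2) (Ici 0 ×ˢ Ici 0)) {a b : ℝ}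
    (ha : 0 ≤ a) (hb : 0 ≤ b) (hfgk : ∀ x y, 0 ≤ x → 0 ≤ y → f x y + g x y ≤ k x y) :
    (∫ x in (0:ℝ)..a, ∫ y in (0:ℝ)..b, f x y) + ∫ x in (0:ℝ)..a, ∫ y in (0:ℝ)..b, g x y ≤
      ∫ x in (0:ℝ)..a, ∫ y in (0:ℝ)..b, k x y := by
  rw [← integral_integral_add_of_continuousOn_quadrant hf hg ha hb]
  exact integral_integral_mono_of_continuousOn_quadrant (hf.add hg) hk ha hb hfgk

end Quadrant

theorem mul_add_mul_add_mul_add_mul_le_max_mul_add {a₁ a₂ a₃ a₄ x y : ℝ} (hx : 0 ≤ x)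
    (hy : 0 ≤ y) : a₁ * x + a₂ * y + (a₃ * x + a₄ * y) ≤ max (a₁ + a₃) (a₂ + a₄) * (x + y) := by
  have hx' := mul_le_mul_of_nonneg_right (le_max_left (a₁ + a₃) (a₂ + a₄)) hx
  have hy' := mul_le_mul_of_nonneg_right (le_max_right (a₁ + a₃) (a₂ + a₄)) hy
  linarith

theorem hasDerivAt_integral_of_continuousOn_Icc {f : ℝ → ℝ} {T t : ℝ}
    (hf : ContinuousOn f (Icc 0 T)) (ht : t ∈ Ioo 0 T) :
    HasDerivAt (fun x => ∫ s in (0:ℝ)..x, f s) (f t) t :=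
  integral_hasDerivAt_right
    ((hf.mono (Icc_subset_Icc_right ht.2.le)).intervalIntegrable_of_Icc ht.1.le)
    ((hf.mono Ioo_subset_Icc_self).stronglyMeasurableAtFilter isOpen_Ioo t ht)
    (hf.continuousAt (Icc_mem_nhds ht.1 ht.2))

theorem continuousOn_primitive_Icc {f : ℝ → ℝ} {T : ℝ} (hT : 0 ≤ T)
    (hf : ContinuousOn f (Icc 0 T)) :
    ContinuousOn (fun x => ∫ s in (0:ℝ)..x, f s) (Icc 0 T) := by
  have h := continuousOn_primitive_interval (μ := volume) (a := 0) (b := T)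
    (by rw [uIcc_of_le hT]; exact hf.integrableOn_Icc)
  rwa [uIcc_of_le hT] at h

theorem le_mul_exp_integral_of_hasDerivAt_le {φ φ' a : ℝ → ℝ} {T : ℝ} (hT : 0 ≤ T)
    (hφ : ContinuousOn φ (Icc 0 T)) (hφ' : ∀ t ∈ Ioo 0 T, HasDerivAt φ (φ' t) t)
    (ha : ContinuousOn a (Icc 0 T)) (hle : ∀ t ∈ Ioo 0 T, φ' t ≤ a t * φ t) :
    φ T ≤ φ 0 * Real.exp (∫ s in (0:ℝ)..T, a s) := by
  set A : ℝ → ℝ := fun t => ∫ s in (0:ℝ)..t, a s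
  have hA : ContinuousOn A (Icc 0 T) := continuousOn_primitive_Icc hT ha
  have hanti : AntitoneOn (fun t => φ t * Real.exp (-A t)) (Icc 0 T) := by
    refine antitoneOn_of_hasDerivWithinAt_nonpos (convex_Icc 0 T)
      (hφ.mul (hA.neg.rexp)) (f' := fun t => (φ' t - a t * φ t) * Real.exp (-A t))
      (fun t ht => ?_) fun t ht => ?_
    · rw [interior_Icc] at ht
      have hd : HasDerivAt (fun t => φ t * Real.exp (-A t))
          (φ' t * Real.exp (-A t) + φ t * (Real.exp (-A t) * -a t)) t :=
        (hφ' t ht).mul (hasDerivAt_integral_of_continuousOn_Icc ha ht).neg.exp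
      exact (hd.congr_deriv (by ring)).hasDerivWithinAt
    · rw [interior_Icc] at ht
      exact mul_nonpos_of_nonpos_of_nonneg (sub_nonpos.2 (hle t ht)) (Real.exp_pos _).le
  have hT0 := hanti (left_mem_Icc.2 hT) (right_mem_Icc.2 hT) hT
  simp only [A, integral_same, neg_zero, Real.exp_zero, mul_one] at hT0
  calc φ T = φ T * Real.exp (-A T) * Real.exp (A T) := by
        rw [mul_assoc, ← Real.exp_add, neg_add_cancel, Real.exp_zero, mul_one]
    _ ≤ φ 0 * Real.exp (A T) := by gcongr

theorem exp_le_one_add_mul_exp (x : ℝ) : Real.exp x ≤ 1 + x * Real.exp x := by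
  have h := mul_le_mul_of_nonneg_right (Real.one_sub_le_exp_neg x) (Real.exp_pos x).le
  rw [← Real.exp_add, neg_add_cancel, Real.exp_zero] at h
  linarith

theorem le_mul_exp_integral_integral_of_le_add_integral_integral {c : ℝ} {H W : ℝ → ℝ → ℝ}
    (hH : ContinuousOn (fun z : ℝ × ℝ => H z.1 z.2) (Ici 0 ×ˢ Ici 0))
    (hW : ContinuousOn (fun z : ℝ × ℝ => W z.1 z.2) (Ici 0 ×ˢ Ici 0))
    (hH0 : ∀ x y, 0 ≤ x → 0 ≤ y → 0 ≤ H x y) (hW0 : ∀ x y, 0 ≤ x → 0 ≤ y → 0 ≤ W x y)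
    (hle : ∀ x y, 0 ≤ x → 0 ≤ y →
      W x y ≤ c + ∫ s in (0:ℝ)..x, ∫ r in (0:ℝ)..y, H s r * W s r)
    {a b : ℝ} (ha : 0 ≤ a) (hb : 0 ≤ b) :
    W a b ≤ c * Real.exp (∫ x in (0:ℝ)..a, ∫ y in (0:ℝ)..b, H x y) := by
  have hHW : ContinuousOn (fun z : ℝ × ℝ => H z.1 z.2 * W z.1 z.2) (Ici 0 ×ˢ Ici 0) := hH.mul hW
  have hHW_slice : ∀ x, 0 ≤ x → IntervalIntegrable (fun y => H x y * W x y) volume 0 b :=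
    fun x hx => intervalIntegrable_slice_of_continuousOn_quadrant
      (f := fun x y => H x y * W x y) hHW hx hb
  set G : ℝ → ℝ := fun x => ∫ y in (0:ℝ)..b, H x y * W x y
  set φ : ℝ → ℝ := fun t => c + ∫ x in (0:ℝ)..t, G x
  have hG : ContinuousOn G (Icc 0 a) :=
    (continuousOn_integral_slice_of_continuousOn_quadrant hHW hb).mono Icc_subset_Ici_self
  have hW_le : ∀ x y, 0 ≤ x → 0 ≤ y → y ≤ b → W x y ≤ φ x := by
    intro x y hx hy hyb
    refine (hle x y hx hy).trans ((add_le_add_iff_left c).2 ?_)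
    refine integral_mono_on hx
      (intervalIntegrable_integral_slice_of_continuousOn_quadrant hHW hx hy)
      (intervalIntegrable_integral_slice_of_continuousOn_quadrant hHW hx hb) fun s hs => ?_
    exact integral_mono_interval le_rfl hy hyb
      (MeasureTheory.ae_restrict_of_forall_mem measurableSet_Ioc fun r hr =>
        mul_nonneg (hH0 s r hs.1 hr.1.le) (hW0 s r hs.1 hr.1.le))
      (hHW_slice s hs.1)
  have hG_le : ∀ x, 0 ≤ x → G x ≤ (∫ y in (0:ℝ)..b, H x y) * φ x := by
    intro x hx
    rw [← integral_mul_const]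
    exact integral_mono_on hb (hHW_slice x hx)
      ((intervalIntegrable_slice_of_continuousOn_quadrant hH hx hb).mul_const _) fun y hy =>
      mul_le_mul_of_nonneg_left (hW_le x y hx hy.1 hy.2) (hH0 x y hx hy.1)
  have hφ : φ a ≤ φ 0 * Real.exp (∫ x in (0:ℝ)..a, ∫ y in (0:ℝ)..b, H x y) :=
    le_mul_exp_integral_of_hasDerivAt_le ha
      (continuousOn_const.add (continuousOn_primitive_Icc ha hG))
      (fun t ht => (hasDerivAt_integral_of_continuousOn_Icc hG ht).const_add c)
      ((continuousOn_integral_slice_of_continuousOn_quadrant hH hb).mono Icc_subset_Ici_self)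
      fun t ht => hG_le t ht.1.le
  simpa only [φ, integral_same, add_zero] using (hW_le a b ha hb le_rfl).trans hφ

theorem pachpatte_system_real_general
    (c₁ c₂ : ℝ) (hc₁ : 0 ≤ c₁) (hc₂ : 0 ≤ c₂)
    (u v h₁ h₂ h₃ h₄ : ℝ → ℝ → ℝ)
    (hu : ContinuousOn (fun z : ℝ × ℝ => u z.1 z.2) (Ici 0 ×ˢ Ici 0))
    (hv : ContinuousOn (fun z : ℝ × ℝ => v z.1 z.2) (Ici 0 ×ˢ Ici 0))
    (hh₁ : ContinuousOn (fun z : ℝ × ℝ => h₁ z.1 z.2) (Ici 0 ×ˢ Ici 0))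
    (hh₂ : ContinuousOn (fun z : ℝ × ℝ => h₂ z.1 z.2) (Ici 0 ×ˢ Ici 0))
    (hh₃ : ContinuousOn (fun z : ℝ × ℝ => h₃ z.1 z.2) (Ici 0 ×ˢ Ici 0))
    (hh₄ : ContinuousOn (fun z : ℝ × ℝ => h₄ z.1 z.2) (Ici 0 ×ˢ Ici 0))
    (hu0 : ∀ t₁ t₂ : ℝ, 0 ≤ t₁ → 0 ≤ t₂ → 0 ≤ u t₁ t₂)
    (hv0 : ∀ t₁ t₂ : ℝ, 0 ≤ t₁ → 0 ≤ t₂ → 0 ≤ v t₁ t₂)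
    (hh₁0 : ∀ t₁ t₂ : ℝ, 0 ≤ t₁ → 0 ≤ t₂ → 0 ≤ h₁ t₁ t₂)
    (hh₃0 : ∀ t₁ t₂ : ℝ, 0 ≤ t₁ → 0 ≤ t₂ → 0 ≤ h₃ t₁ t₂)
    (hineq₁ : ∀ t₁ t₂ : ℝ, 0 ≤ t₁ → 0 ≤ t₂ →
      u t₁ t₂ ≤ c₁ + ∫ s₁ in (0:ℝ)..t₁, ∫ s₂ in (0:ℝ)..t₂,
        (h₁ s₁ s₂ * u s₁ s₂ + h₂ s₁ s₂ * v s₁ s₂))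
    (hineq₂ : ∀ t₁ t₂ : ℝ, 0 ≤ t₁ → 0 ≤ t₂ →
      v t₁ t₂ ≤ c₂ + ∫ s₁ in (0:ℝ)..t₁, ∫ s₂ in (0:ℝ)..t₂,
        (h₃ s₁ s₂ * u s₁ s₂ + h₄ s₁ s₂ * v s₁ s₂))
    (H : ℝ → ℝ → ℝ)
    (hH : ∀ t₁ t₂ : ℝ, H t₁ t₂ = max (h₁ t₁ t₂ + h₃ t₁ t₂) (h₂ t₁ t₂ + h₄ t₁ t₂)) :
    ∀ t₁ t₂ : ℝ, 0 ≤ t₁ → 0 ≤ t₂ →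
      u t₁ t₂ + v t₁ t₂ ≤ (c₁ + c₂) +
        ((c₁ + c₂) * ∫ s₁ in (0:ℝ)..t₁, ∫ s₂ in (0:ℝ)..t₂, H s₁ s₂) *
        Real.exp (∫ s₁ in (0:ℝ)..t₁, ∫ s₂ in (0:ℝ)..t₂, H s₁ s₂) := by
  intro t₁ t₂ ht₁ ht₂
  have hHc : ContinuousOn (fun z : ℝ × ℝ => H z.1 z.2) (Ici 0 ×ˢ Ici 0) :=
    ((hh₁.add hh₃).sup (hh₂.add hh₄)).congr fun z _ => hH z.1 z.2
  have hH0 : ∀ x y, 0 ≤ x → 0 ≤ y → 0 ≤ H x y := fun x y hx hy =>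
    hH x y ▸ le_max_of_le_left (add_nonneg (hh₁0 x y hx hy) (hh₃0 x y hx hy))
  have hsum : ∀ x y, 0 ≤ x → 0 ≤ y → u x y + v x y ≤ (c₁ + c₂) +
      ∫ s₁ in (0:ℝ)..x, ∫ s₂ in (0:ℝ)..y, H s₁ s₂ * (u s₁ s₂ + v s₁ s₂) := by
    intro x y hx hy
    have hint := integral_integral_add_le_of_continuousOn_quadrant
      (f := fun s₁ s₂ => h₁ s₁ s₂ * u s₁ s₂ + h₂ s₁ s₂ * v s₁ s₂)
      (g := fun s₁ s₂ => h₃ s₁ s₂ * u s₁ s₂ + h₄ s₁ s₂ * v s₁ s₂)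
      (k := fun s₁ s₂ => H s₁ s₂ * (u s₁ s₂ + v s₁ s₂))
      ((hh₁.mul hu).add (hh₂.mul hv)) ((hh₃.mul hu).add (hh₄.mul hv)) (hHc.mul (hu.add hv))
      hx hy fun s₁ s₂ hs₁ hs₂ => hH s₁ s₂ ▸
        mul_add_mul_add_mul_add_mul_le_max_mul_add (hu0 s₁ s₂ hs₁ hs₂) (hv0 s₁ s₂ hs₁ hs₂)
    linarith [hineq₁ x y hx hy, hineq₂ x y hx hy]
  calc u t₁ t₂ + v t₁ t₂
      ≤ (c₁ + c₂) * Real.exp (∫ s₁ in (0:ℝ)..t₁, ∫ s₂ in (0:ℝ)..t₂, H s₁ s₂) :=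
        le_mul_exp_integral_integral_of_le_add_integral_integral hHc (hu.add hv) hH0
          (fun x y hx hy => add_nonneg (hu0 x y hx hy) (hv0 x y hx hy)) hsum ht₁ ht₂
    _ ≤ (c₁ + c₂) * (1 + (∫ s₁ in (0:ℝ)..t₁, ∫ s₂ in (0:ℝ)..t₂, H s₁ s₂) *
          Real.exp (∫ s₁ in (0:ℝ)..t₁, ∫ s₂ in (0:ℝ)..t₂, H s₁ s₂)) :=
        mul_le_mul_of_nonneg_left (exp_le_one_add_mul_exp _) (add_nonneg hc₁ hc₂)
    _ = _ := by ring

theorem pachpatte_system_real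
    (c₁ c₂ : ℝ) (hc₁ : 0 ≤ c₁) (hc₂ : 0 ≤ c₂)
    (u v h₁ h₂ h₃ h₄ : ℝ → ℝ → ℝ)
    (hu : ContinuousOn (fun z : ℝ × ℝ => u z.1 z.2) (Ici 0 ×ˢ Ici 0))
    (hv : ContinuousOn (fun z : ℝ × ℝ => v z.1 z.2) (Ici 0 ×ˢ Ici 0))
    (hh₁ : ContinuousOn (fun z : ℝ × ℝ => h₁ z.1 z.2) (Ici 0 ×ˢ Ici 0))
    (hh₂ : ContinuousOn (fun z : ℝ × ℝ => h₂ z.1 z.2) (Ici 0 ×ˢ Ici 0))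
    (hh₃ : ContinuousOn (fun z : ℝ × ℝ => h₃ z.1 z.2) (Ici 0 ×ˢ Ici 0))
    (hh₄ : ContinuousOn (fun z : ℝ × ℝ => h₄ z.1 z.2) (Ici 0 ×ˢ Ici 0))
    (hu0 : ∀ t₁ t₂ : ℝ, 0 ≤ t₁ → 0 ≤ t₂ → 0 ≤ u t₁ t₂)
    (hv0 : ∀ t₁ t₂ : ℝ, 0 ≤ t₁ → 0 ≤ t₂ → 0 ≤ v t₁ t₂)
    (hh₁0 : ∀ t₁ t₂ : ℝ, 0 ≤ t₁ → 0 ≤ t₂ → 0 ≤ h₁ t₁ t₂)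
    (hh₂0 : ∀ t₁ t₂ : ℝ, 0 ≤ t₁ → 0 ≤ t₂ → 0 ≤ h₂ t₁ t₂)
    (hh₃0 : ∀ t₁ t₂ : ℝ, 0 ≤ t₁ → 0 ≤ t₂ → 0 ≤ h₃ t₁ t₂)
    (hh₄0 : ∀ t₁ t₂ : ℝ, 0 ≤ t₁ → 0 ≤ t₂ → 0 ≤ h₄ t₁ t₂)
    (hineq₁ : ∀ t₁ t₂ : ℝ, 0 ≤ t₁ → 0 ≤ t₂ →
      u t₁ t₂ ≤ c₁ + ∫ s₁ in (0:ℝ)..t₁, ∫ s₂ in (0:ℝ)..t₂,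
        (h₁ s₁ s₂ * u s₁ s₂ + h₂ s₁ s₂ * v s₁ s₂))
    (hineq₂ : ∀ t₁ t₂ : ℝ, 0 ≤ t₁ → 0 ≤ t₂ →
      v t₁ t₂ ≤ c₂ + ∫ s₁ in (0:ℝ)..t₁, ∫ s₂ in (0:ℝ)..t₂,
        (h₃ s₁ s₂ * u s₁ s₂ + h₄ s₁ s₂ * v s₁ s₂))
    (H : ℝ → ℝ → ℝ)
    (hH : ∀ t₁ t₂ : ℝ, H t₁ t₂ = max (h₁ t₁ t₂ + h₃ t₁ t₂) (h₂ t₁ t₂ + h₄ t₁ t₂)) :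
    ∀ t₁ t₂ : ℝ, 0 ≤ t₁ → 0 ≤ t₂ →
      u t₁ t₂ + v t₁ t₂ ≤ (c₁ + c₂) +
        ((c₁ + c₂) * ∫ s₁ in (0:ℝ)..t₁, ∫ s₂ in (0:ℝ)..t₂, H s₁ s₂) *
        Real.exp (∫ s₁ in (0:ℝ)..t₁, ∫ s₂ in (0:ℝ)..t₂, H s₁ s₂) :=
  pachpatte_system_real_general c₁ c₂ hc₁ hc₂ u v h₁ h₂ h₃ h₄ hu hv hh₁ hh₂ hh₃ hh₄ hu0 hv0 hh₁0
    hh₃0 hineq₁ hineq₂ H hH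
end

section
/- Let c₁, c₂ ≥ 0 and u, v, h₁, h₂, h₃, h₄ : ℕ × ℕ → ℝ be nonnegative. Suppose for all m,n: u(m,n) ≤ c₁ + ∑_{i<m}∑_{j<n} (h₁ u + h₂ v)(i,j) and v(m,n) ≤ c₂ + ∑_{i<m}∑_{j<n} (h₃ u + h₄ v)(i,j). Let c₃ = c₁ + c₂, H = max(h₁+h₃, h₂+h₄), A(m,n) = c₃·∑_{i<m}∑_{j<n} H(i,j), and c(m,n) = ∑_{j<n} H(m,j). Then u(m,n) + v(m,n) ≤ c₃ + A(m,n)·∏_{i<m} (1 + c(i,n)) for all m,n. -/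
open Finset

lemma one_le_prod_one_add' (f : ℕ → ℝ) (hf : ∀ i, 0 ≤ f i) (m : ℕ) :
    1 ≤ ∏ i ∈ range m, (1 + f i) := by
  calc (1:ℝ) = ∏ _i ∈ range m, 1 := by simp
  _ ≤ _ := Finset.prod_le_prod (by intros; norm_num) (by intro i _; linarith [hf i])

lemma prod_le_one_add_sum_mul' (f : ℕ → ℝ) (hf : ∀ i, 0 ≤ f i) (m : ℕ) :
    ∏ i ∈ range m, (1 + f i) ≤ 1 + (∑ i ∈ range m, f i) * ∏ i ∈ range m, (1 + f i) := by
  induction m with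
  | zero => simp
  | succ m ih =>
    have hP : (1:ℝ) ≤ ∏ i ∈ range m, (1 + f i) := one_le_prod_one_add' f hf m
    have hS : 0 ≤ ∑ i ∈ range m, f i := Finset.sum_nonneg fun i _ => hf i
    rw [Finset.prod_range_succ, Finset.sum_range_succ]
    have e1 := mul_le_mul_of_nonneg_right ih (by linarith [hf m] : (0:ℝ) ≤ 1 + f m)
    have e2 : f m * 1 ≤ f m * ((∏ i ∈ range m, (1 + f i)) * (1 + f m)) :=
      mul_le_mul_of_nonneg_left
        (by nlinarith [hf m] : (1:ℝ) ≤ (∏ i ∈ range m, (1 + f i)) * (1 + f m)) (hf m)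
    nlinarith [e1, e2]

theorem pachpatte_system_discrete
    (c₁ c₂ : ℝ) (hc₁ : 0 ≤ c₁) (hc₂ : 0 ≤ c₂)
    (u v h₁ h₂ h₃ h₄ : ℕ → ℕ → ℝ)
    (hu0 : ∀ m n, 0 ≤ u m n) (hv0 : ∀ m n, 0 ≤ v m n)
    (hh₁0 : ∀ m n, 0 ≤ h₁ m n) (hh₂0 : ∀ m n, 0 ≤ h₂ m n)
    (hh₃0 : ∀ m n, 0 ≤ h₃ m n) (hh₄0 : ∀ m n, 0 ≤ h₄ m n)
    (hineq₁ : ∀ m n : ℕ, u m n ≤ c₁ +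
      ∑ i ∈ Finset.range m, ∑ j ∈ Finset.range n,
        (h₁ i j * u i j + h₂ i j * v i j))
    (hineq₂ : ∀ m n : ℕ, v m n ≤ c₂ +
      ∑ i ∈ Finset.range m, ∑ j ∈ Finset.range n,
        (h₃ i j * u i j + h₄ i j * v i j))
    (H : ℕ → ℕ → ℝ)
    (hH : ∀ m n, H m n = max (h₁ m n + h₃ m n) (h₂ m n + h₄ m n)) :
    ∀ m n : ℕ, u m n + v m n ≤ (c₁ + c₂) +
      ((c₁ + c₂) * ∑ i ∈ Finset.range m, ∑ j ∈ Finset.range n, H i j) *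
      ∏ i ∈ Finset.range m, (1 + ∑ j ∈ Finset.range n, H i j) := by
  intro m n
  have hc₃ : (0:ℝ) ≤ c₁ + c₂ := add_nonneg hc₁ hc₂
  set w : ℕ → ℕ → ℝ := fun i j => u i j + v i j with hw
  have hw0 : ∀ i j, 0 ≤ w i j := fun i j => add_nonneg (hu0 i j) (hv0 i j)
  have hH0 : ∀ i j, 0 ≤ H i j := by
    intro i j; rw [hH]
    exact le_trans (add_nonneg (hh₁0 i j) (hh₃0 i j)) (le_max_left _ _)
  have hkey : ∀ i j, h₁ i j * u i j + h₂ i j * v i j +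
      (h₃ i j * u i j + h₄ i j * v i j) ≤ H i j * w i j := by
    intro i j
    have h1 : h₁ i j + h₃ i j ≤ H i j := (hH i j) ▸ le_max_left _ _
    have h2 : h₂ i j + h₄ i j ≤ H i j := (hH i j) ▸ le_max_right _ _
    simp only [hw]
    nlinarith [mul_le_mul_of_nonneg_right h1 (hu0 i j),
      mul_le_mul_of_nonneg_right h2 (hv0 i j)]
  set B : ℕ → ℝ := fun m' => (c₁ + c₂) +
      ∑ i ∈ range m', ∑ j ∈ range n, H i j * w i j with hB
  have hA : ∀ m' k, k ≤ n → w m' k ≤ B m' := by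
    intro m' k hk
    have step : w m' k ≤ (c₁ + c₂) + ∑ i ∈ range m', ∑ j ∈ range k,
        (h₁ i j * u i j + h₂ i j * v i j + (h₃ i j * u i j + h₄ i j * v i j)) := by
      have h1 := hineq₁ m' k
      have h2 := hineq₂ m' k
      simp only [hw, Finset.sum_add_distrib] at h1 h2 ⊢
      linarith
    refine step.trans ?_
    simp only [hB]
    gcongr with i hi
    calc ∑ j ∈ range k, (h₁ i j * u i j + h₂ i j * v i j +
            (h₃ i j * u i j + h₄ i j * v i j))
        ≤ ∑ j ∈ range k, H i j * w i j := Finset.sum_le_sum fun j _ => hkey i j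
      _ ≤ ∑ j ∈ range n, H i j * w i j :=
        Finset.sum_le_sum_of_subset_of_nonneg (Finset.range_subset_range.2 hk)
          (fun j _ _ => mul_nonneg (hH0 i j) (hw0 i j))
  have hBnn : ∀ m', 0 ≤ B m' := fun m' => add_nonneg hc₃
    (Finset.sum_nonneg fun i _ => Finset.sum_nonneg fun j _ =>
      mul_nonneg (hH0 i j) (hw0 i j))
  have hBbound : ∀ m', B m' ≤ (c₁ + c₂) * ∏ i ∈ range m', (1 + ∑ j ∈ range n, H i j) := by
    intro m'
    induction m' with
    | zero => simp [hB]
    | succ m' ih =>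
      have hsum : B (m' + 1) = B m' + ∑ j ∈ range n, H m' j * w m' j := by
        simp only [hB, Finset.sum_range_succ]; ring
      have h1 : ∑ j ∈ range n, H m' j * w m' j ≤ (∑ j ∈ range n, H m' j) * B m' := by
        rw [Finset.sum_mul]
        exact Finset.sum_le_sum fun j hj => mul_le_mul_of_nonneg_left
          (hA m' j (Nat.le_of_lt (Finset.mem_range.1 hj))) (hH0 m' j)
      have hc : 0 ≤ ∑ j ∈ range n, H m' j := Finset.sum_nonneg fun j _ => hH0 m' j
      have h2 : B (m' + 1) ≤ B m' * (1 + ∑ j ∈ range n, H m' j) := by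
        rw [hsum]; nlinarith
      refine h2.trans ?_
      rw [Finset.prod_range_succ, ← mul_assoc]
      exact mul_le_mul_of_nonneg_right ih (by linarith)
  have h3 := prod_le_one_add_sum_mul' (fun i => ∑ j ∈ range n, H i j)
    (fun i => Finset.sum_nonneg fun j _ => hH0 i j) m
  have h4 : w m n ≤ B m := hA m n le_rfl
  have h5 := hBbound m
  have h6 : (c₁ + c₂) * ∏ i ∈ range m, (1 + ∑ j ∈ range n, H i j) ≤
      (c₁ + c₂) * (1 + (∑ i ∈ range m, ∑ j ∈ range n, H i j) *
        ∏ i ∈ range m, (1 + ∑ j ∈ range n, H i j)) :=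
    mul_le_mul_of_nonneg_left h3 hc₃
  have hwmn : u m n + v m n = w m n := rfl
  rw [hwmn]
  nlinarith [h4, h5, h6]
end

section
/- Let u, p, q : ℝ × ℝ → ℝ be continuous nonnegative on [0,∞)², and let k : [0,∞)⁴ → ℝ be C² in its first two variables with k and its partial derivatives k_{t₁}, k_{t₂}, k_{t₁t₂} nonnegative. Suppose u(t₁,t₂) ≤ p(t₁,t₂) + q(t₁,t₂)·∫₀^{t₁}∫₀^{t₂} k(t₁,t₂,s₁,s₂) u(s₁,s₂) ds₂ ds₁ for all t₁,t₂ ≥ 0. Define a(t₁,t₂) = k(t₁,t₂,t₁,t₂)p(t₁,t₂) + ∫₀^{t₂} k_{t₂}(t₁,t₂,t₁,s₂)p(t₁,s₂) ds₂ + ∫₀^{t₁} k_{t₁}(t₁,t₂,s₁,t₂)p(s₁,t₂) ds₁ + ∫₀^{t₁}∫₀^{t₂} k_{t₁t₂}(t₁,t₂,s₁,s₂)p(s₁,s₂) ds₂ ds₁, define b analogously with q in place of p, A(t₁,t₂) = ∫₀^{t₁}∫₀^{t₂} a(s₁,s₂) ds₂ ds₁, and c(t₁,t₂) = ∫₀^{t₂}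 b(t₁,s₂) ds₂. Then u(t₁,t₂) ≤ p(t₁,t₂) + q(t₁,t₂)·A(t₁,t₂)·exp(∫₀^{t₁} c(s₁,t₂) ds₁) for all t₁,t₂ ≥ 0. -/
/-!
Write `V(x, y) = ∫₀ˣ ∫₀ʸ k(x, y, s₁, s₂) u(s₁, s₂)`. Applying the Leibniz rule in `x` and then
in `y` gives `V(x, y) = ∫₀ˣ ∫₀ʸ E_u(r, w)`, where `E_u = ∂ₓ∂ᵧV` is the expression that defines
`a` and `b` with `u` in place of `p` and `q`. As `k` is nondecreasing in its first two
variables, so is `V`, hence `u ≤ p + q V(r, t₂)` on `[0, r] × [0, t₂]` and, `E` being monotone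
and linear in `u`, `E_u(r, w) ≤ E_p(r, w) + E_q(r, w) V(r, t₂)`. Integrating, `φ = V(·, t₂)`
satisfies `φ(x) ≤ A(t₁, t₂) + ∫₀ˣ c(r, t₂) φ(r) dr` on `[0, t₁]`, and Gronwall's inequality bounds
`V(t₁, t₂)`, which is then inserted into the hypothesis on `u`.

The data are first extended from the closed quadrant to the whole space by `max · 0` in every
variable, so that everything is continuous.
-/

open intervalIntegral Set

theorem intervalIntegral_swap_of_continuous {f : ℝ → ℝ → ℝ} (hf : Continuous ↿f)
    (a b c d : ℝ) :
    ∫ x in a..b, ∫ y in c..d, f x y = ∫ y in c..d, ∫ x in a..b, f x y :=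
  MeasureTheory.intervalIntegral_intervalIntegral_swap <|
    (hf.continuousOn.integrableOn_compact (isCompact_uIcc.prod isCompact_uIcc)).mono_set
      (prod_mono uIoc_subset_uIcc uIoc_subset_uIcc)

theorem intervalIntegral_triangle_swap {f : ℝ → ℝ → ℝ} (hf : Continuous ↿f) {a b : ℝ}
    (hab : a ≤ b) :
    ∫ w in a..b, ∫ s in a..w, f w s = ∫ s in a..b, ∫ w in s..b, f w s := by
  set F : ℝ × ℝ → ℝ := {p | p.2 < p.1}.indicator ↿f
  have hF : MeasureTheory.IntegrableOn F (uIoc a b ×ˢ uIoc a b) :=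
    ((hf.continuousOn.integrableOn_compact (isCompact_uIcc.prod isCompact_uIcc)).mono_set
      (prod_mono uIoc_subset_uIcc uIoc_subset_uIcc)).indicator
      (measurableSet_lt measurable_snd measurable_fst)
  have slice_snd : ∀ w ∈ uIcc a b, ∫ s in a..w, f w s = ∫ s in a..b, F (w, s) := by
    intro w hw
    rw [uIcc_of_le hab] at hw
    have : (fun s => F (w, s)) = (Iio w).indicator (f w) := by
      ext s; simp only [F, indicator_apply, mem_ofPred_eq, mem_Iio]; rfl
    rw [this, integral_of_le hab, MeasureTheory.integral_Ioc_eq_integral_Ioo,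
      MeasureTheory.setIntegral_indicator measurableSet_Iio, Ioo_inter_Iio, min_eq_right hw.2,
      ← MeasureTheory.integral_Ioc_eq_integral_Ioo, ← integral_of_le hw.1]
  have slice_fst : ∀ s ∈ uIcc a b, ∫ w in a..b, F (w, s) = ∫ w in s..b, f w s := by
    intro s hs
    rw [uIcc_of_le hab] at hs
    have : (fun w => F (w, s)) = (Ioi s).indicator (f · s) := by
      ext w; simp only [F, indicator_apply, mem_ofPred_eq, mem_Ioi]; rfl
    rw [this, integral_of_le hab, MeasureTheory.setIntegral_indicator measurableSet_Ioi,
      Ioc_inter_Ioi, max_eq_right hs.1, ← integral_of_le hs.2]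
  rw [integral_congr slice_snd,
    MeasureTheory.intervalIntegral_intervalIntegral_swap (F := fun w s => F (w, s)) hF,
    integral_congr slice_fst]

/-- The Leibniz rule `d/dw ∫ₐʷ G(w, s) ds = G(w, w) + ∫ₐʷ ∂_w G(w, s) ds`, integrated over
`[a, b]`. -/
theorem integral_eq_integral_diag_add_integral {G G₁ : ℝ → ℝ → ℝ} (hG : Continuous ↿G)
    (hG₁ : Continuous ↿G₁) {a b : ℝ} (hab : a ≤ b)
    (hftc : ∀ s ∈ Icc a b, ∫ w in s..b, G₁ w s = G b s - G s s) :
    ∫ s in a..b, G b s = ∫ w in a..b, (G w w + ∫ s in a..w, G₁ w s) := by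
  have hftc' : EqOn (fun s => ∫ w in s..b, G₁ w s) (fun s => G b s - G s s) (uIcc a b) :=
    fun s hs => hftc s (uIcc_of_le hab ▸ hs)
  rw [integral_add (by apply Continuous.intervalIntegrable; fun_prop)
      (by apply Continuous.intervalIntegrable; fun_prop),
    intervalIntegral_triangle_swap hG₁ hab, integral_congr hftc',
    ← integral_add (by apply Continuous.intervalIntegrable; fun_prop)
      (by apply Continuous.intervalIntegrable; fun_prop)]
  simp only [add_sub_cancel]

theorem le_mul_exp_integral_of_le_add_integral_s6 {φ g : ℝ → ℝ} {D a b : ℝ}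
    (hφ : Continuous φ) (hg : Continuous g) (hab : a ≤ b) (hg₀ : ∀ x ∈ Icc a b, 0 ≤ g x)
    (h : ∀ x ∈ Icc a b, φ x ≤ D + ∫ s in a..x, g s * φ s) :
    φ b ≤ D * Real.exp (∫ s in a..b, g s) := by
  set W := fun x => ∫ s in a..x, g s * φ s
  set C := fun x => ∫ s in a..x, g s
  set H := fun x => (D + W x) * Real.exp (-C x)
  have hH : ∀ x, HasDerivAt H (g x * (φ x - (D + W x)) * Real.exp (-C x)) x := by
    intro x
    have hW : HasDerivAt W (g x * φ x) x :=
      ((by fun_prop : Continuous fun s => g s * φ s).integral_hasStrictDerivAt a x).hasDerivAt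
    have hC : HasDerivAt C (g x) x := (hg.integral_hasStrictDerivAt a x).hasDerivAt
    exact ((hW.const_add D).mul hC.neg.exp).congr_deriv (by simp only [Pi.neg_apply]; ring)
  have hHanti : AntitoneOn H (Icc a b) := by
    refine antitoneOn_of_deriv_nonpos (convex_Icc a b)
      (fun x _ => (hH x).continuousAt.continuousWithinAt)
      (fun x _ => (hH x).differentiableAt.differentiableWithinAt) fun x hx => ?_
    rw [interior_Icc] at hx
    rw [(hH x).deriv]
    have hφx := h x (Ioo_subset_Icc_self hx)
    have hgx := hg₀ x (Ioo_subset_Icc_self hx)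
    exact mul_nonpos_of_nonpos_of_nonneg (mul_nonpos_of_nonneg_of_nonpos hgx (by linarith))
      (Real.exp_pos _).le
  have hHb : H b ≤ D := by
    simpa only [H, W, C, integral_same, neg_zero, Real.exp_zero, add_zero, mul_one] using
      hHanti (left_mem_Icc.2 hab) (right_mem_Icc.2 hab) hab
  calc φ b ≤ D + W b := h b (right_mem_Icc.2 hab)
    _ = H b * Real.exp (C b) := by
      simp only [H, mul_assoc, ← Real.exp_add, neg_add_cancel, Real.exp_zero, mul_one]
    _ ≤ D * Real.exp (C b) := by gcongr

theorem integral_add_mul_const {f g : ℝ → ℝ} {a b : ℝ}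
    (hf : IntervalIntegrable f MeasureTheory.volume a b)
    (hg : IntervalIntegrable g MeasureTheory.volume a b) (c : ℝ) :
    ∫ s in a..b, (f s + g s * c) = (∫ s in a..b, f s) + (∫ s in a..b, g s) * c := by
  rw [integral_add hf (hg.mul_const c), integral_mul_const]

theorem integral_eq_sub_of_hasDerivAt_of_pos {f f' : ℝ → ℝ} {a b : ℝ} (hf : Continuous f)
    (hf' : Continuous f') (hderiv : ∀ t, 0 < t → HasDerivAt f (f' t) t) (ha : 0 ≤ a)
    (hab : a ≤ b) : ∫ t in a..b, f' t = f b - f a :=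
  integral_eq_sub_of_hasDerivAt_of_le hab hf.continuousOn
    (fun t ht => hderiv t (ha.trans_lt ht.1)) (hf'.intervalIntegrable a b)

theorem nonneg_of_mem_uIcc {x s : ℝ} (hx : 0 ≤ x) (hs : s ∈ uIcc 0 x) : 0 ≤ s :=
  (le_min le_rfl hx).trans hs.1

theorem integral_integral_congr {f g : ℝ → ℝ → ℝ} {a₁ b₁ a₂ b₂ : ℝ}
    (h : ∀ s₁ ∈ uIcc a₁ b₁, ∀ s₂ ∈ uIcc a₂ b₂, f s₁ s₂ = g s₁ s₂) :
    ∫ s₁ in a₁..b₁, ∫ s₂ in a₂..b₂, f s₁ s₂ = ∫ s₁ in a₁..b₁, ∫ s₂ in a₂..b₂, g s₁ s₂ :=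
  integral_congr fun s₁ hs₁ => integral_congr fun s₂ hs₂ => h s₁ hs₁ s₂ hs₂

noncomputable def volterra (K : ℝ → ℝ → ℝ → ℝ → ℝ) (U : ℝ → ℝ → ℝ) (x y : ℝ) : ℝ :=
  ∫ s₁ in (0:ℝ)..x, ∫ s₂ in (0:ℝ)..y, K x y s₁ s₂ * U s₁ s₂

/-- `∂ₓ∂ᵧ (volterra K U)` when `K₁ = ∂ₓK`, `K₂ = ∂ᵧK` and `K₁₂ = ∂ᵧK₁`. -/
noncomputable def volterraMixedDeriv (K K₁ K₂ K₁₂ : ℝ → ℝ → ℝ → ℝ → ℝ) (U : ℝ → ℝ → ℝ)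
    (x y : ℝ) : ℝ :=
  K x y x y * U x y + (∫ s₂ in (0:ℝ)..y, K₂ x y x s₂ * U x s₂) +
    (∫ s₁ in (0:ℝ)..x, K₁ x y s₁ y * U s₁ y) + volterra K₁₂ U x y

/-- The derivatives are only required at positive points, so that kernels given on the closed
quadrant can be extended to the whole space by `max · 0` in each variable. -/
structure HasKernelPartials (K K₁ K₂ K₁₂ : ℝ → ℝ → ℝ → ℝ → ℝ) : Prop where
  continuous : Continuous ↿K
  continuous₁ : Continuous ↿K₁
  continuous₂ : Continuous ↿K₂
  continuous₁₂ : Continuous ↿K₁₂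
  hasDerivAt₁ : ∀ t y s₁ s₂, 0 < t → HasDerivAt (fun t => K t y s₁ s₂) (K₁ t y s₁ s₂) t
  hasDerivAt₂ : ∀ x t s₁ s₂, 0 < t → HasDerivAt (fun t => K x t s₁ s₂) (K₂ x t s₁ s₂) t
  hasDerivAt₁₂ : ∀ x t s₁ s₂, 0 < t → HasDerivAt (fun t => K₁ x t s₁ s₂) (K₁₂ x t s₁ s₂) t

section Volterra

variable {K K₁ K₂ K₁₂ : ℝ → ℝ → ℝ → ℝ → ℝ} {U P Q : ℝ → ℝ → ℝ}

@[fun_prop]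
theorem Continuous.volterra {X : Type*} [TopologicalSpace X] {f g : X → ℝ}
    (hK : Continuous ↿K) (hU : Continuous ↿U) (hf : Continuous f) (hg : Continuous g) :
    Continuous fun z => volterra K U (f z) (g z) := by
  unfold _root_.volterra; fun_prop

@[fun_prop]
theorem Continuous.volterraMixedDeriv {X : Type*} [TopologicalSpace X] {f g : X → ℝ}
    (hK : Continuous ↿K) (hK₁ : Continuous ↿K₁) (hK₂ : Continuous ↿K₂)
    (hK₁₂ : Continuous ↿K₁₂) (hU : Continuous ↿U) (hf : Continuous f) (hg : Continuous g) :
    Continuous fun z => volterraMixedDeriv K K₁ K₂ K₁₂ U (f z) (g z) := by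
  unfold _root_.volterraMixedDeriv; fun_prop

theorem volterra_transpose (hK : Continuous ↿K) (hU : Continuous ↿U) (x y : ℝ) :
    volterra (fun x y s₁ s₂ => K y x s₂ s₁) (fun s₁ s₂ => U s₂ s₁) y x = volterra K U x y :=
  intervalIntegral_swap_of_continuous (by fun_prop) _ _ _ _

theorem volterra_eq_integral_fst (hK : Continuous ↿K) (hK₁ : Continuous ↿K₁)
    (hU : Continuous ↿U)
    (hK₁d : ∀ t y s₁ s₂, 0 < t → HasDerivAt (fun t => K t y s₁ s₂) (K₁ t y s₁ s₂) t)
    {x : ℝ} (hx : 0 ≤ x) (y : ℝ) :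
    volterra K U x y =
      ∫ r in (0:ℝ)..x, ((∫ s₂ in (0:ℝ)..y, K r y r s₂ * U r s₂) + volterra K₁ U r y) :=
  integral_eq_integral_diag_add_integral
    (G := fun t s₁ => ∫ s₂ in (0:ℝ)..y, K t y s₁ s₂ * U s₁ s₂)
    (G₁ := fun t s₁ => ∫ s₂ in (0:ℝ)..y, K₁ t y s₁ s₂ * U s₁ s₂) (by fun_prop) (by fun_prop) hx
    fun s₁ hs₁ => by
      rw [intervalIntegral_swap_of_continuous (by fun_prop), ← integral_sub
        (Continuous.intervalIntegrable (by fun_prop) _ _)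
        (Continuous.intervalIntegrable (by fun_prop) _ _)]
      refine integral_congr fun s₂ _ => ?_
      simp only [integral_mul_const, sub_mul, integral_eq_sub_of_hasDerivAt_of_pos
        (by fun_prop) (by fun_prop) (hK₁d · y s₁ s₂) hs₁.1 hs₁.2]

theorem volterra_eq_integral_snd (hK : Continuous ↿K) (hK₂ : Continuous ↿K₂)
    (hU : Continuous ↿U)
    (hK₂d : ∀ x t s₁ s₂, 0 < t → HasDerivAt (fun t => K x t s₁ s₂) (K₂ x t s₁ s₂) t)
    (x : ℝ) {y : ℝ} (hy : 0 ≤ y) :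
    volterra K U x y =
      ∫ w in (0:ℝ)..y, ((∫ s₁ in (0:ℝ)..x, K x w s₁ w * U s₁ w) + volterra K₂ U x w) := by
  rw [← volterra_transpose hK hU, volterra_eq_integral_fst (by fun_prop) (by fun_prop)
    (by fun_prop) (fun t y s₁ s₂ => hK₂d y t s₂ s₁) hy]
  exact integral_congr fun w _ => by rw [volterra_transpose hK₂ hU]

theorem volterra_eq_integral_integral_volterraMixedDeriv (hK : HasKernelPartials K K₁ K₂ K₁₂)
    (hU : Continuous ↿U) {x y : ℝ} (hx : 0 ≤ x) (hy : 0 ≤ y) :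
    volterra K U x y = ∫ r in (0:ℝ)..x, ∫ w in (0:ℝ)..y, volterraMixedDeriv K K₁ K₂ K₁₂ U r w := by
  obtain ⟨hK, hK₁, hK₂, hK₁₂, hK₁d, hK₂d, hK₁₂d⟩ := hK
  rw [volterra_eq_integral_fst hK hK₁ hU hK₁d hx]
  refine integral_congr fun r _ => ?_
  have diag : ∫ s₂ in (0:ℝ)..y, K r y r s₂ * U r s₂ =
      ∫ w in (0:ℝ)..y, (K r w r w * U r w + ∫ s₂ in (0:ℝ)..w, K₂ r w r s₂ * U r s₂) :=
    integral_eq_integral_diag_add_integral (G := fun t s => K r t r s * U r s)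
      (by fun_prop) (by fun_prop) hy fun s hs => by
        rw [integral_mul_const, integral_eq_sub_of_hasDerivAt_of_pos (by fun_prop)
          (by fun_prop) (hK₂d r · r s) hs.1 hs.2, sub_mul]
  rw [diag, volterra_eq_integral_snd hK₁ hK₁₂ hU hK₁₂d r hy, ← integral_add
    (Continuous.intervalIntegrable (by fun_prop) _ _)
    (Continuous.intervalIntegrable (by fun_prop) _ _)]
  refine integral_congr fun w _ => ?_
  simp only [volterraMixedDeriv]
  ring

theorem HasKernelPartials.mono (hK : HasKernelPartials K K₁ K₂ K₁₂) (hK₁₀ : 0 ≤ K₁)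
    (hK₂₀ : 0 ≤ K₂) {x x' y y' : ℝ} (hx : 0 ≤ x) (hxx' : x ≤ x') (hy : 0 ≤ y) (hyy' : y ≤ y')
    (s₁ s₂ : ℝ) : K x y s₁ s₂ ≤ K x' y' s₁ s₂ := by
  obtain ⟨hK, hK₁, hK₂, -, hK₁d, hK₂d, -⟩ := hK
  have h₁ : 0 ≤ K x' y s₁ s₂ - K x y s₁ s₂ := by
    rw [← integral_eq_sub_of_hasDerivAt_of_pos (by fun_prop) (by fun_prop) (hK₁d · y s₁ s₂) hx
      hxx']
    exact integral_nonneg hxx' fun t _ => hK₁₀ t y s₁ s₂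
  have h₂ : 0 ≤ K x' y' s₁ s₂ - K x' y s₁ s₂ := by
    rw [← integral_eq_sub_of_hasDerivAt_of_pos (by fun_prop) (by fun_prop) (hK₂d x' · s₁ s₂) hy
      hyy']
    exact integral_nonneg hyy' fun t _ => hK₂₀ x' t s₁ s₂
  linarith

theorem volterra_mono (hK : Continuous ↿K) (hU : Continuous ↿U) (hK₀ : 0 ≤ K) (hU₀ : 0 ≤ U)
    {x x' y y' : ℝ} (hx : 0 ≤ x) (hxx' : x ≤ x') (hy : 0 ≤ y) (hyy' : y ≤ y')
    (hKK' : ∀ s₁ s₂, K x y s₁ s₂ ≤ K x' y' s₁ s₂) :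
    volterra K U x y ≤ volterra K U x' y' := by
  have hnonneg : ∀ s₁ s₂, 0 ≤ K x' y' s₁ s₂ * U s₁ s₂ := fun s₁ s₂ =>
    mul_nonneg (hK₀ _ _ _ _) (hU₀ _ _)
  calc volterra K U x y ≤ ∫ s₁ in (0:ℝ)..x, ∫ s₂ in (0:ℝ)..y', K x' y' s₁ s₂ * U s₁ s₂ := by
        refine integral_mono_on hx (Continuous.intervalIntegrable (by fun_prop) _ _)
          (Continuous.intervalIntegrable (by fun_prop) _ _) fun s₁ _ => ?_
        refine (integral_mono_on hy (Continuous.intervalIntegrable (by fun_prop) _ _)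
          (Continuous.intervalIntegrable (by fun_prop) _ _) fun s₂ _ =>
            mul_le_mul_of_nonneg_right (hKK' s₁ s₂) (hU₀ s₁ s₂)).trans ?_
        exact integral_mono_interval le_rfl hy hyy' (MeasureTheory.ae_of_all _ (hnonneg s₁))
          (Continuous.intervalIntegrable (by fun_prop) _ _)
    _ ≤ volterra K U x' y' :=
        integral_mono_interval le_rfl hx hxx' (MeasureTheory.ae_of_all _ fun s₁ =>
          integral_nonneg (hy.trans hyy') fun s₂ _ => hnonneg s₁ s₂)
          (Continuous.intervalIntegrable (by fun_prop) _ _)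

theorem volterraMixedDeriv_nonneg (hK₀ : 0 ≤ K) (hK₁₀ : 0 ≤ K₁) (hK₂₀ : 0 ≤ K₂)
    (hK₁₂₀ : 0 ≤ K₁₂) (hU₀ : 0 ≤ U) {x y : ℝ} (hx : 0 ≤ x) (hy : 0 ≤ y) :
    0 ≤ volterraMixedDeriv K K₁ K₂ K₁₂ U x y := by
  have hprod : ∀ {L : ℝ → ℝ → ℝ → ℝ → ℝ}, 0 ≤ L → ∀ x y s₁ s₂, 0 ≤ L x y s₁ s₂ * U s₁ s₂ :=
    fun hL x y s₁ s₂ => mul_nonneg (hL x y s₁ s₂) (hU₀ s₁ s₂)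
  unfold volterraMixedDeriv volterra
  refine add_nonneg (add_nonneg (add_nonneg (hprod hK₀ _ _ _ _) ?_) ?_) ?_
  · exact integral_nonneg hy fun s _ => hprod hK₂₀ _ _ _ _
  · exact integral_nonneg hx fun s _ => hprod hK₁₀ _ _ _ _
  · exact integral_nonneg hx fun s₁ _ => integral_nonneg hy fun s₂ _ => hprod hK₁₂₀ _ _ _ _

theorem volterraMixedDeriv_mono {U' : ℝ → ℝ → ℝ} (hK : HasKernelPartials K K₁ K₂ K₁₂)
    (hU : Continuous ↿U) (hU' : Continuous ↿U') (hK₀ : 0 ≤ K) (hK₁₀ : 0 ≤ K₁) (hK₂₀ : 0 ≤ K₂)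
    (hK₁₂₀ : 0 ≤ K₁₂) {x y : ℝ} (hx : 0 ≤ x) (hy : 0 ≤ y)
    (hUU' : ∀ s₁ ∈ Icc 0 x, ∀ s₂ ∈ Icc 0 y, U s₁ s₂ ≤ U' s₁ s₂) :
    volterraMixedDeriv K K₁ K₂ K₁₂ U x y ≤ volterraMixedDeriv K K₁ K₂ K₁₂ U' x y := by
  obtain ⟨hK, hK₁, hK₂, hK₁₂, -, -, -⟩ := hK
  have hxx : x ∈ Icc 0 x := right_mem_Icc.2 hx
  have hyy : y ∈ Icc 0 y := right_mem_Icc.2 hy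
  unfold volterraMixedDeriv volterra
  gcongr ?_ + ?_ + ?_ + ?_
  · exact mul_le_mul_of_nonneg_left (hUU' x hxx y hyy) (hK₀ _ _ _ _)
  · exact integral_mono_on hy (Continuous.intervalIntegrable (by fun_prop) _ _)
      (Continuous.intervalIntegrable (by fun_prop) _ _) fun s hs =>
        mul_le_mul_of_nonneg_left (hUU' x hxx s hs) (hK₂₀ _ _ _ _)
  · exact integral_mono_on hx (Continuous.intervalIntegrable (by fun_prop) _ _)
      (Continuous.intervalIntegrable (by fun_prop) _ _) fun s hs =>
        mul_le_mul_of_nonneg_left (hUU' s hs y hyy) (hK₁₀ _ _ _ _)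
  · exact integral_mono_on hx (Continuous.intervalIntegrable (by fun_prop) _ _)
      (Continuous.intervalIntegrable (by fun_prop) _ _) fun s₁ hs₁ =>
        integral_mono_on hy (Continuous.intervalIntegrable (by fun_prop) _ _)
          (Continuous.intervalIntegrable (by fun_prop) _ _) fun s₂ hs₂ =>
            mul_le_mul_of_nonneg_left (hUU' s₁ hs₁ s₂ hs₂) (hK₁₂₀ _ _ _ _)

theorem volterra_add_mul_const (hK : Continuous ↿K) (hP : Continuous ↿P) (hQ : Continuous ↿Q)
    (c x y : ℝ) :
    volterra K (fun s₁ s₂ => P s₁ s₂ + Q s₁ s₂ * c) x y =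
      volterra K P x y + volterra K Q x y * c := by
  have inner : ∀ s₁, ∫ s₂ in (0:ℝ)..y, K x y s₁ s₂ * (P s₁ s₂ + Q s₁ s₂ * c) =
      (∫ s₂ in (0:ℝ)..y, K x y s₁ s₂ * P s₁ s₂) + (∫ s₂ in (0:ℝ)..y, K x y s₁ s₂ * Q s₁ s₂) * c :=
    fun s₁ => by
      simp only [mul_add, ← mul_assoc]
      exact integral_add_mul_const (Continuous.intervalIntegrable (by fun_prop) _ _)
        (Continuous.intervalIntegrable (by fun_prop) _ _) c
  simp only [volterra, inner]
  exact integral_add_mul_const (Continuous.intervalIntegrable (by fun_prop) _ _)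
    (Continuous.intervalIntegrable (by fun_prop) _ _) c

theorem volterraMixedDeriv_add_mul_const (hK : HasKernelPartials K K₁ K₂ K₁₂)
    (hP : Continuous ↿P) (hQ : Continuous ↿Q) (c x y : ℝ) :
    volterraMixedDeriv K K₁ K₂ K₁₂ (fun s₁ s₂ => P s₁ s₂ + Q s₁ s₂ * c) x y =
      volterraMixedDeriv K K₁ K₂ K₁₂ P x y + volterraMixedDeriv K K₁ K₂ K₁₂ Q x y * c := by
  obtain ⟨hK, hK₁, hK₂, hK₁₂, -, -, -⟩ := hK
  simp only [volterraMixedDeriv, volterra_add_mul_const hK₁₂ hP hQ, mul_add, ← mul_assoc]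
  rw [integral_add_mul_const (Continuous.intervalIntegrable (by fun_prop) _ _)
      (Continuous.intervalIntegrable (by fun_prop) _ _),
    integral_add_mul_const (Continuous.intervalIntegrable (by fun_prop) _ _)
      (Continuous.intervalIntegrable (by fun_prop) _ _)]
  ring

theorem volterraMixedDeriv_le_add_mul_volterra (hK : HasKernelPartials K K₁ K₂ K₁₂)
    (hK₀ : 0 ≤ K) (hK₁₀ : 0 ≤ K₁) (hK₂₀ : 0 ≤ K₂) (hK₁₂₀ : 0 ≤ K₁₂) (hU : Continuous ↿U)
    (hP : Continuous ↿P) (hQ : Continuous ↿Q) (hU₀ : 0 ≤ U) (hQ₀ : 0 ≤ Q)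
    (hineq : ∀ x y, 0 ≤ x → 0 ≤ y → U x y ≤ P x y + Q x y * volterra K U x y)
    {r w t : ℝ} (hr : 0 ≤ r) (hw : 0 ≤ w) (hwt : w ≤ t) :
    volterraMixedDeriv K K₁ K₂ K₁₂ U r w ≤
      volterraMixedDeriv K K₁ K₂ K₁₂ P r w +
        volterraMixedDeriv K K₁ K₂ K₁₂ Q r w * volterra K U r t := by
  rw [← volterraMixedDeriv_add_mul_const hK hP hQ]
  refine volterraMixedDeriv_mono hK hU (by fun_prop) hK₀ hK₁₀ hK₂₀ hK₁₂₀ hr hw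
    fun s₁ hs₁ s₂ hs₂ => (hineq s₁ s₂ hs₁.1 hs₂.1).trans ?_
  gcongr
  · exact hQ₀ s₁ s₂
  · exact volterra_mono hK.continuous hU hK₀ hU₀ hs₁.1 hs₁.2 hs₂.1 (hs₂.2.trans hwt)
      (hK.mono hK₁₀ hK₂₀ hs₁.1 hs₁.2 hs₂.1 (hs₂.2.trans hwt))

theorem volterra_le_integral_mul_exp (hK : HasKernelPartials K K₁ K₂ K₁₂) (hK₀ : 0 ≤ K)
    (hK₁₀ : 0 ≤ K₁) (hK₂₀ : 0 ≤ K₂) (hK₁₂₀ : 0 ≤ K₁₂) (hU : Continuous ↿U)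
    (hP : Continuous ↿P) (hQ : Continuous ↿Q) (hU₀ : 0 ≤ U) (hP₀ : 0 ≤ P) (hQ₀ : 0 ≤ Q)
    (hineq : ∀ x y, 0 ≤ x → 0 ≤ y → U x y ≤ P x y + Q x y * volterra K U x y)
    {t₁ t₂ : ℝ} (ht₁ : 0 ≤ t₁) (ht₂ : 0 ≤ t₂) :
    volterra K U t₁ t₂ ≤
      (∫ r in (0:ℝ)..t₁, ∫ w in (0:ℝ)..t₂, volterraMixedDeriv K K₁ K₂ K₁₂ P r w) *
        Real.exp (∫ r in (0:ℝ)..t₁, ∫ w in (0:ℝ)..t₂, volterraMixedDeriv K K₁ K₂ K₁₂ Q r w) := by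
  have ⟨hKc, hK₁c, hK₂c, hK₁₂c, _, _, _⟩ := hK
  set E := volterraMixedDeriv K K₁ K₂ K₁₂
  set φ := fun r => volterra K U r t₂
  have hφ : ∀ x ∈ Icc 0 t₁, φ x ≤ (∫ r in (0:ℝ)..t₁, ∫ w in (0:ℝ)..t₂, E P r w) +
      ∫ r in (0:ℝ)..x, (∫ w in (0:ℝ)..t₂, E Q r w) * φ r := by
    intro x hx
    calc φ x = ∫ r in (0:ℝ)..x, ∫ w in (0:ℝ)..t₂, E U r w :=
          volterra_eq_integral_integral_volterraMixedDeriv hK hU hx.1 ht₂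
      _ ≤ ∫ r in (0:ℝ)..x, ((∫ w in (0:ℝ)..t₂, E P r w) + (∫ w in (0:ℝ)..t₂, E Q r w) * φ r) := by
          refine integral_mono_on hx.1 (Continuous.intervalIntegrable (by fun_prop) _ _)
            (Continuous.intervalIntegrable (by fun_prop) _ _) fun r hr => ?_
          rw [← integral_add_mul_const (Continuous.intervalIntegrable (by fun_prop) _ _)
            (Continuous.intervalIntegrable (by fun_prop) _ _)]
          exact integral_mono_on ht₂ (Continuous.intervalIntegrable (by fun_prop) _ _)
            (Continuous.intervalIntegrable (by fun_prop) _ _) fun w hw =>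
              volterraMixedDeriv_le_add_mul_volterra hK hK₀ hK₁₀ hK₂₀ hK₁₂₀ hU hP hQ hU₀ hQ₀
                hineq hr.1 hw.1 hw.2
      _ ≤ _ := by
          rw [integral_add (Continuous.intervalIntegrable (by fun_prop) _ _)
            (Continuous.intervalIntegrable (by fun_prop) _ _)]
          gcongr
          exact integral_mono_interval le_rfl hx.1 hx.2
            (MeasureTheory.ae_restrict_of_forall_mem measurableSet_Ioc fun r hr =>
              integral_nonneg ht₂ fun w hw =>
                volterraMixedDeriv_nonneg hK₀ hK₁₀ hK₂₀ hK₁₂₀ hP₀ hr.1.le hw.1)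
            (Continuous.intervalIntegrable (by fun_prop) _ _)
  exact le_mul_exp_integral_of_le_add_integral_s6 (by fun_prop) (by fun_prop) ht₁
    (fun r hr => integral_nonneg ht₂ fun w hw =>
      volterraMixedDeriv_nonneg hK₀ hK₁₀ hK₂₀ hK₁₂₀ hQ₀ hr.1 hw.1) hφ

end Volterra

def clamp₂ (U : ℝ → ℝ → ℝ) (x y : ℝ) : ℝ := U (max x 0) (max y 0)

def clamp₄ (K : ℝ → ℝ → ℝ → ℝ → ℝ) (x y s₁ s₂ : ℝ) : ℝ :=
  K (max x 0) (max y 0) (max s₁ 0) (max s₂ 0)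

section Clamp

variable {K K' K₁ K₂ K₁₂ : ℝ → ℝ → ℝ → ℝ → ℝ} {U : ℝ → ℝ → ℝ}

theorem clamp₂_of_nonneg {x y : ℝ} (hx : 0 ≤ x) (hy : 0 ≤ y) : clamp₂ U x y = U x y := by
  simp only [clamp₂, max_eq_left hx, max_eq_left hy]

theorem clamp₄_of_nonneg {x y s₁ s₂ : ℝ} (hx : 0 ≤ x) (hy : 0 ≤ y) (hs₁ : 0 ≤ s₁)
    (hs₂ : 0 ≤ s₂) : clamp₄ K x y s₁ s₂ = K x y s₁ s₂ := by
  simp only [clamp₄, max_eq_left hx, max_eq_left hy, max_eq_left hs₁, max_eq_left hs₂]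

theorem clamp₂_nonneg (hU : ∀ x y, 0 ≤ x → 0 ≤ y → 0 ≤ U x y) : 0 ≤ clamp₂ U :=
  fun x y => hU _ _ (le_max_right x 0) (le_max_right y 0)

theorem clamp₄_nonneg (hK : ∀ x y s₁ s₂, 0 ≤ x → 0 ≤ y → 0 ≤ s₁ → 0 ≤ s₂ → 0 ≤ K x y s₁ s₂) :
    0 ≤ clamp₄ K :=
  fun x y s₁ s₂ => hK _ _ _ _ (le_max_right x 0) (le_max_right y 0) (le_max_right s₁ 0)
    (le_max_right s₂ 0)

theorem continuous_clamp₂ (hU : ContinuousOn (fun z : ℝ × ℝ => U z.1 z.2) (Ici 0 ×ˢ Ici 0)) :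
    Continuous ↿(clamp₂ U) :=
  hU.comp_continuous (f := fun z : ℝ × ℝ => (max z.1 0, max z.2 0)) (by fun_prop)
    fun z => ⟨le_max_right z.1 0, le_max_right z.2 0⟩

theorem continuous_clamp₄ (hK : ContinuousOn (fun z : ℝ × ℝ × ℝ × ℝ => K z.1 z.2.1 z.2.2.1 z.2.2.2)
      (Ici 0 ×ˢ Ici 0 ×ˢ Ici 0 ×ˢ Ici 0)) :
    Continuous ↿(clamp₄ K) :=
  hK.comp_continuous
    (f := fun z : ℝ × ℝ × ℝ × ℝ => (max z.1 0, max z.2.1 0, max z.2.2.1 0, max z.2.2.2 0))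
    (by fun_prop) fun z =>
      ⟨le_max_right z.1 0, le_max_right z.2.1 0, le_max_right z.2.2.1 0, le_max_right z.2.2.2 0⟩

theorem hasDerivAt_clamp₄_fst (hK : ∀ t₁ t₂ s₁ s₂ : ℝ, 0 ≤ t₁ → 0 ≤ t₂ → 0 ≤ s₁ → 0 ≤ s₂ →
      HasDerivAt (fun x => K x t₂ s₁ s₂) (K' t₁ t₂ s₁ s₂) t₁)
    (t y s₁ s₂ : ℝ) (ht : 0 < t) :
    HasDerivAt (fun t => clamp₄ K t y s₁ s₂) (clamp₄ K' t y s₁ s₂) t := by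
  refine ((hK t _ _ _ ht.le (le_max_right y 0) (le_max_right s₁ 0)
    (le_max_right s₂ 0)).congr_of_eventuallyEq ?_).congr_deriv ?_
  · filter_upwards [lt_mem_nhds ht] with t' ht' using by simp only [clamp₄, max_eq_left ht'.le]
  · simp only [clamp₄, max_eq_left ht.le]

theorem hasDerivAt_clamp₄_snd (hK : ∀ t₁ t₂ s₁ s₂ : ℝ, 0 ≤ t₁ → 0 ≤ t₂ → 0 ≤ s₁ → 0 ≤ s₂ →
      HasDerivAt (fun y => K t₁ y s₁ s₂) (K' t₁ t₂ s₁ s₂) t₂)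
    (x t s₁ s₂ : ℝ) (ht : 0 < t) :
    HasDerivAt (fun t => clamp₄ K x t s₁ s₂) (clamp₄ K' x t s₁ s₂) t := by
  refine ((hK _ t _ _ (le_max_right x 0) ht.le (le_max_right s₁ 0)
    (le_max_right s₂ 0)).congr_of_eventuallyEq ?_).congr_deriv ?_
  · filter_upwards [lt_mem_nhds ht] with t' ht' using by simp only [clamp₄, max_eq_left ht'.le]
  · simp only [clamp₄, max_eq_left ht.le]

theorem volterra_clamp {x y : ℝ} (hx : 0 ≤ x) (hy : 0 ≤ y) :
    volterra (clamp₄ K) (clamp₂ U) x y = volterra K U x y :=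
  integral_integral_congr fun s₁ hs₁ s₂ hs₂ => by
    rw [clamp₄_of_nonneg hx hy (nonneg_of_mem_uIcc hx hs₁) (nonneg_of_mem_uIcc hy hs₂),
      clamp₂_of_nonneg (nonneg_of_mem_uIcc hx hs₁) (nonneg_of_mem_uIcc hy hs₂)]

theorem volterraMixedDeriv_clamp {x y : ℝ} (hx : 0 ≤ x) (hy : 0 ≤ y) :
    volterraMixedDeriv (clamp₄ K) (clamp₄ K₁) (clamp₄ K₂) (clamp₄ K₁₂) (clamp₂ U) x y =
      volterraMixedDeriv K K₁ K₂ K₁₂ U x y := by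
  have h₂ : ∫ s₂ in (0:ℝ)..y, clamp₄ K₂ x y x s₂ * clamp₂ U x s₂ =
      ∫ s₂ in (0:ℝ)..y, K₂ x y x s₂ * U x s₂ := integral_congr fun s₂ hs₂ => by
    rw [clamp₄_of_nonneg hx hy hx (nonneg_of_mem_uIcc hy hs₂),
      clamp₂_of_nonneg hx (nonneg_of_mem_uIcc hy hs₂)]
  have h₁ : ∫ s₁ in (0:ℝ)..x, clamp₄ K₁ x y s₁ y * clamp₂ U s₁ y =
      ∫ s₁ in (0:ℝ)..x, K₁ x y s₁ y * U s₁ y := integral_congr fun s₁ hs₁ => by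
    rw [clamp₄_of_nonneg hx hy (nonneg_of_mem_uIcc hx hs₁) hy,
      clamp₂_of_nonneg (nonneg_of_mem_uIcc hx hs₁) hy]
  simp only [volterraMixedDeriv, h₁, h₂, volterra_clamp hx hy, clamp₄_of_nonneg hx hy hx hy,
    clamp₂_of_nonneg hx hy]

theorem integral_integral_volterraMixedDeriv_clamp {x y : ℝ} (hx : 0 ≤ x) (hy : 0 ≤ y) :
    ∫ r in (0:ℝ)..x, ∫ w in (0:ℝ)..y,
        volterraMixedDeriv (clamp₄ K) (clamp₄ K₁) (clamp₄ K₂) (clamp₄ K₁₂) (clamp₂ U) r w =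
      ∫ r in (0:ℝ)..x, ∫ w in (0:ℝ)..y, volterraMixedDeriv K K₁ K₂ K₁₂ U r w :=
  integral_integral_congr fun _ hr _ hw =>
    volterraMixedDeriv_clamp (nonneg_of_mem_uIcc hx hr) (nonneg_of_mem_uIcc hy hw)

theorem hasKernelPartials_clamp₄
    (hKc : ContinuousOn (fun z : ℝ × ℝ × ℝ × ℝ => K z.1 z.2.1 z.2.2.1 z.2.2.2)
      (Ici 0 ×ˢ Ici 0 ×ˢ Ici 0 ×ˢ Ici 0))
    (hK₁c : ContinuousOn (fun z : ℝ × ℝ × ℝ × ℝ => K₁ z.1 z.2.1 z.2.2.1 z.2.2.2)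
      (Ici 0 ×ˢ Ici 0 ×ˢ Ici 0 ×ˢ Ici 0))
    (hK₂c : ContinuousOn (fun z : ℝ × ℝ × ℝ × ℝ => K₂ z.1 z.2.1 z.2.2.1 z.2.2.2)
      (Ici 0 ×ˢ Ici 0 ×ˢ Ici 0 ×ˢ Ici 0))
    (hK₁₂c : ContinuousOn (fun z : ℝ × ℝ × ℝ × ℝ => K₁₂ z.1 z.2.1 z.2.2.1 z.2.2.2)
      (Ici 0 ×ˢ Ici 0 ×ˢ Ici 0 ×ˢ Ici 0))
    (hK₁ : ∀ t₁ t₂ s₁ s₂ : ℝ, 0 ≤ t₁ → 0 ≤ t₂ → 0 ≤ s₁ → 0 ≤ s₂ →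
      HasDerivAt (fun x => K x t₂ s₁ s₂) (K₁ t₁ t₂ s₁ s₂) t₁)
    (hK₂ : ∀ t₁ t₂ s₁ s₂ : ℝ, 0 ≤ t₁ → 0 ≤ t₂ → 0 ≤ s₁ → 0 ≤ s₂ →
      HasDerivAt (fun y => K t₁ y s₁ s₂) (K₂ t₁ t₂ s₁ s₂) t₂)
    (hK₁₂ : ∀ t₁ t₂ s₁ s₂ : ℝ, 0 ≤ t₁ → 0 ≤ t₂ → 0 ≤ s₁ → 0 ≤ s₂ →
      HasDerivAt (fun y => K₁ t₁ y s₁ s₂) (K₁₂ t₁ t₂ s₁ s₂) t₂) :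
    HasKernelPartials (clamp₄ K) (clamp₄ K₁) (clamp₄ K₂) (clamp₄ K₁₂) :=
  ⟨continuous_clamp₄ hKc, continuous_clamp₄ hK₁c, continuous_clamp₄ hK₂c,
    continuous_clamp₄ hK₁₂c, hasDerivAt_clamp₄_fst hK₁, hasDerivAt_clamp₄_snd hK₂,
    hasDerivAt_clamp₄_snd hK₁₂⟩

end Clamp

theorem pachpatte_general_kernel_real
    (u p q : ℝ → ℝ → ℝ) (k k₁ k₂ k₁₂ : ℝ → ℝ → ℝ → ℝ → ℝ)
    (hu : ContinuousOn (fun z : ℝ × ℝ => u z.1 z.2) (Ici 0 ×ˢ Ici 0))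
    (hp : ContinuousOn (fun z : ℝ × ℝ => p z.1 z.2) (Ici 0 ×ˢ Ici 0))
    (hq : ContinuousOn (fun z : ℝ × ℝ => q z.1 z.2) (Ici 0 ×ˢ Ici 0))
    (hu0 : ∀ t₁ t₂ : ℝ, 0 ≤ t₁ → 0 ≤ t₂ → 0 ≤ u t₁ t₂)
    (hp0 : ∀ t₁ t₂ : ℝ, 0 ≤ t₁ → 0 ≤ t₂ → 0 ≤ p t₁ t₂)
    (hq0 : ∀ t₁ t₂ : ℝ, 0 ≤ t₁ → 0 ≤ t₂ → 0 ≤ q t₁ t₂)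
    -- k is C² in its first two variables, with the indicated partial derivatives
    (hk₁ : ∀ t₁ t₂ s₁ s₂ : ℝ, 0 ≤ t₁ → 0 ≤ t₂ → 0 ≤ s₁ → 0 ≤ s₂ →
      HasDerivAt (fun x => k x t₂ s₁ s₂) (k₁ t₁ t₂ s₁ s₂) t₁)
    (hk₂ : ∀ t₁ t₂ s₁ s₂ : ℝ, 0 ≤ t₁ → 0 ≤ t₂ → 0 ≤ s₁ → 0 ≤ s₂ →
      HasDerivAt (fun y => k t₁ y s₁ s₂) (k₂ t₁ t₂ s₁ s₂) t₂)
    (hk₁₂ : ∀ t₁ t₂ s₁ s₂ : ℝ, 0 ≤ t₁ → 0 ≤ t₂ → 0 ≤ s₁ → 0 ≤ s₂ →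
      HasDerivAt (fun y => k₁ t₁ y s₁ s₂) (k₁₂ t₁ t₂ s₁ s₂) t₂)
    (hkc : ContinuousOn (fun z : ℝ × ℝ × ℝ × ℝ => k z.1 z.2.1 z.2.2.1 z.2.2.2)
      (Ici 0 ×ˢ Ici 0 ×ˢ Ici 0 ×ˢ Ici 0))
    (hk₁c : ContinuousOn (fun z : ℝ × ℝ × ℝ × ℝ => k₁ z.1 z.2.1 z.2.2.1 z.2.2.2)
      (Ici 0 ×ˢ Ici 0 ×ˢ Ici 0 ×ˢ Ici 0))
    (hk₂c : ContinuousOn (fun z : ℝ × ℝ × ℝ × ℝ => k₂ z.1 z.2.1 z.2.2.1 z.2.2.2)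
      (Ici 0 ×ˢ Ici 0 ×ˢ Ici 0 ×ˢ Ici 0))
    (hk₁₂c : ContinuousOn (fun z : ℝ × ℝ × ℝ × ℝ => k₁₂ z.1 z.2.1 z.2.2.1 z.2.2.2)
      (Ici 0 ×ˢ Ici 0 ×ˢ Ici 0 ×ˢ Ici 0))
    (hk0 : ∀ t₁ t₂ s₁ s₂ : ℝ, 0 ≤ t₁ → 0 ≤ t₂ → 0 ≤ s₁ → 0 ≤ s₂ → 0 ≤ k t₁ t₂ s₁ s₂)
    (hk₁0 : ∀ t₁ t₂ s₁ s₂ : ℝ, 0 ≤ t₁ → 0 ≤ t₂ → 0 ≤ s₁ → 0 ≤ s₂ → 0 ≤ k₁ t₁ t₂ s₁ s₂)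
    (hk₂0 : ∀ t₁ t₂ s₁ s₂ : ℝ, 0 ≤ t₁ → 0 ≤ t₂ → 0 ≤ s₁ → 0 ≤ s₂ → 0 ≤ k₂ t₁ t₂ s₁ s₂)
    (hk₁₂0 : ∀ t₁ t₂ s₁ s₂ : ℝ, 0 ≤ t₁ → 0 ≤ t₂ → 0 ≤ s₁ → 0 ≤ s₂ → 0 ≤ k₁₂ t₁ t₂ s₁ s₂)
    (hineq : ∀ t₁ t₂ : ℝ, 0 ≤ t₁ → 0 ≤ t₂ →
      u t₁ t₂ ≤ p t₁ t₂ + q t₁ t₂ *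
        ∫ s₁ in (0:ℝ)..t₁, ∫ s₂ in (0:ℝ)..t₂, k t₁ t₂ s₁ s₂ * u s₁ s₂)
    (a b A c : ℝ → ℝ → ℝ)
    (ha : ∀ t₁ t₂ : ℝ, a t₁ t₂ =
      k t₁ t₂ t₁ t₂ * p t₁ t₂ +
      (∫ s₂ in (0:ℝ)..t₂, k₂ t₁ t₂ t₁ s₂ * p t₁ s₂) +
      (∫ s₁ in (0:ℝ)..t₁, k₁ t₁ t₂ s₁ t₂ * p s₁ t₂) +
      ∫ s₁ in (0:ℝ)..t₁, ∫ s₂ in (0:ℝ)..t₂, k₁₂ t₁ t₂ s₁ s₂ * p s₁ s₂)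
    (hb : ∀ t₁ t₂ : ℝ, b t₁ t₂ =
      k t₁ t₂ t₁ t₂ * q t₁ t₂ +
      (∫ s₂ in (0:ℝ)..t₂, k₂ t₁ t₂ t₁ s₂ * q t₁ s₂) +
      (∫ s₁ in (0:ℝ)..t₁, k₁ t₁ t₂ s₁ t₂ * q s₁ t₂) +
      ∫ s₁ in (0:ℝ)..t₁, ∫ s₂ in (0:ℝ)..t₂, k₁₂ t₁ t₂ s₁ s₂ * q s₁ s₂)
    (hA : ∀ t₁ t₂ : ℝ, A t₁ t₂ = ∫ s₁ in (0:ℝ)..t₁, ∫ s₂ in (0:ℝ)..t₂, a s₁ s₂)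
    (hc : ∀ t₁ t₂ : ℝ, c t₁ t₂ = ∫ s₂ in (0:ℝ)..t₂, b t₁ s₂) :
    ∀ t₁ t₂ : ℝ, 0 ≤ t₁ → 0 ≤ t₂ →
      u t₁ t₂ ≤ p t₁ t₂ + q t₁ t₂ * A t₁ t₂ *
        Real.exp (∫ s₁ in (0:ℝ)..t₁, c s₁ t₂) := by
  intro t₁ t₂ ht₁ ht₂
  have hV := volterra_le_integral_mul_exp
    (hasKernelPartials_clamp₄ hkc hk₁c hk₂c hk₁₂c hk₁ hk₂ hk₁₂) (clamp₄_nonneg hk0)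
    (clamp₄_nonneg hk₁0) (clamp₄_nonneg hk₂0) (clamp₄_nonneg hk₁₂0) (continuous_clamp₂ hu)
    (continuous_clamp₂ hp) (continuous_clamp₂ hq) (clamp₂_nonneg hu0) (clamp₂_nonneg hp0)
    (clamp₂_nonneg hq0) (fun x y hx hy => by
      simp only [clamp₂_of_nonneg hx hy, volterra_clamp hx hy]
      exact hineq x y hx hy) ht₁ ht₂
  rw [volterra_clamp ht₁ ht₂, integral_integral_volterraMixedDeriv_clamp ht₁ ht₂,
    integral_integral_volterraMixedDeriv_clamp ht₁ ht₂] at hV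
  have hA' : A t₁ t₂ =
      ∫ r in (0:ℝ)..t₁, ∫ w in (0:ℝ)..t₂, volterraMixedDeriv k k₁ k₂ k₁₂ p r w := by
    rw [hA]
    exact integral_integral_congr fun r _ w _ => ha r w
  have hc' : ∫ r in (0:ℝ)..t₁, c r t₂ =
      ∫ r in (0:ℝ)..t₁, ∫ w in (0:ℝ)..t₂, volterraMixedDeriv k k₁ k₂ k₁₂ q r w :=
    integral_congr fun r _ => (hc r t₂).trans (integral_congr fun w _ => hb r w)
  calc u t₁ t₂ ≤ p t₁ t₂ + q t₁ t₂ * volterra k u t₁ t₂ := hineq t₁ t₂ ht₁ ht₂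
    _ ≤ p t₁ t₂ + q t₁ t₂ * (A t₁ t₂ * Real.exp (∫ s₁ in (0:ℝ)..t₁, c s₁ t₂)) := by
      rw [hA', hc']
      gcongr
      exact hq0 t₁ t₂ ht₁ ht₂
    _ = p t₁ t₂ + q t₁ t₂ * A t₁ t₂ * Real.exp (∫ s₁ in (0:ℝ)..t₁, c s₁ t₂) := by ring
end

section
/- Let u : ℕ × ℕ → ℝ with u(0,n) = u(m,0) = 0 for all m,n, and with nonnegative second mixed forward difference Δ₁Δ₂u(m,n) = u(m+1,n+1) − u(m+1,n) − u(m,n+1) + u(m,n) ≥ 0. Let c : ℕ × ℕ → ℝ be nonnegative, and let a : ℕ → ℝ, b : ℕ → ℝ be positive and nondecreasing. If Δ₁Δ₂u(m,n) ≤ a(m) + b(n) + ∑_{i<m}∑_{j<n} c(i,j)·(u(i,j) + Δ₁Δ₂u(i,j)) for all m,n, then u(m,n) ≤ ∑_{i<m}∑_{j<n} h(i,j), where p(m,n) = (a(m+1)−a(m))/(a(m)+b(0)) + ∑_{j<n}(1 + c(m,j)), q(m,n) = (a(0)+b(n))·c(m,n)·∏_{i<m}(1+p(i,n)), and h(m,n)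 = a(m) + b(n) + ∑_{i<m}∑_{j<n} q(i,j). -/
theorem pachpatte_integrodynamic_discrete
    (u c : ℕ → ℕ → ℝ) (a b : ℕ → ℝ)
    (hu0 : ∀ n, u 0 n = 0) (hu0' : ∀ m, u m 0 = 0)
    (hΔ : ∀ m n : ℕ, 0 ≤ u (m+1) (n+1) - u (m+1) n - u m (n+1) + u m n)
    (hc0 : ∀ m n, 0 ≤ c m n)
    (ha : ∀ m, 0 < a m) (hb : ∀ n, 0 < b n)
    (hamono : Monotone a) (hbmono : Monotone b)
    (hineq : ∀ m n : ℕ,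
      u (m+1) (n+1) - u (m+1) n - u m (n+1) + u m n ≤ a m + b n +
        ∑ i ∈ Finset.range m, ∑ j ∈ Finset.range n,
          c i j * (u i j + (u (i+1) (j+1) - u (i+1) j - u i (j+1) + u i j)))
    (p q h : ℕ → ℕ → ℝ)
    (hp : ∀ m n : ℕ, p m n = (a (m+1) - a m) / (a m + b 0) +
      ∑ j ∈ Finset.range n, (1 + c m j))
    (hq : ∀ m n : ℕ, q m n = (a 0 + b n) * c m n *
      ∏ i ∈ Finset.range m, (1 + p i n))
    (hh : ∀ m n : ℕ, h m n = a m + b n +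
      ∑ i ∈ Finset.range m, ∑ j ∈ Finset.range n, q i j) :
    ∀ m n : ℕ, u m n ≤ ∑ i ∈ Finset.range m, ∑ j ∈ Finset.range n, h i j := by
  set D : ℕ → ℕ → ℝ := fun m n => u (m+1) (n+1) - u (m+1) n - u m (n+1) + u m n
    with hDdef
  have hD : ∀ m n, 0 ≤ D m n := hΔ
  -- telescoping: u m n = ∑∑ D
  have huD : ∀ m n, u m n = ∑ i ∈ Finset.range m, ∑ j ∈ Finset.range n, D i j := by
    intro m n
    have inner : ∀ i, ∑ j ∈ Finset.range n, D i j = u (i+1) n - u i n := by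
      intro i
      have key := Finset.sum_range_sub (f := fun j => u (i+1) j - u i j) (n := n)
      have heq : ∀ j ∈ Finset.range n, D i j =
          (fun j => u (i+1) j - u i j) (j+1) - (fun j => u (i+1) j - u i j) j := by
        intro j _; simp only [hDdef]; ring
      rw [Finset.sum_congr rfl heq, key]
      simp [hu0' (i+1), hu0' i]
    rw [Finset.sum_congr rfl (fun i _ => inner i),
      Finset.sum_range_sub (f := fun i => u i n), hu0 n]
    ring
  have hu_nonneg : ∀ m n, 0 ≤ u m n := by
    intro m n
    rw [huD m n]
    exact Finset.sum_nonneg fun i _ => Finset.sum_nonneg fun j _ => hD i j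
  set v : ℕ → ℕ → ℝ := fun m n => u m n + D m n with hvdef
  have hv_nonneg : ∀ m n, 0 ≤ v m n := fun m n => add_nonneg (hu_nonneg m n) (hD m n)
  set z : ℕ → ℕ → ℝ := fun m n => a m + b n +
      ∑ i ∈ Finset.range m, ∑ j ∈ Finset.range n, c i j * v i j with hzdef
  have hz_ab : ∀ m n, a m + b n ≤ z m n := by
    intro m n
    simp only [hzdef]
    have : (0:ℝ) ≤ ∑ i ∈ Finset.range m, ∑ j ∈ Finset.range n, c i j * v i j :=
      Finset.sum_nonneg fun i _ => Finset.sum_nonneg fun j _ =>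
        mul_nonneg (hc0 i j) (hv_nonneg i j)
    linarith
  have hz_pos : ∀ m n, 0 < z m n := fun m n =>
    lt_of_lt_of_le (add_pos (ha m) (hb n)) (hz_ab m n)
  have hDz : ∀ m n, D m n ≤ z m n := fun m n => hineq m n
  set r : ℕ → ℕ → ℝ := fun m n => z m n +
      ∑ i ∈ Finset.range m, ∑ j ∈ Finset.range n, z i j with hrdef
  have hzr : ∀ m n, z m n ≤ r m n := by
    intro m n
    simp only [hrdef]
    have : (0:ℝ) ≤ ∑ i ∈ Finset.range m, ∑ j ∈ Finset.range n, z i j :=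
      Finset.sum_nonneg fun i _ => Finset.sum_nonneg fun j _ => (hz_pos i j).le
    linarith
  have hr_nonneg : ∀ m n, 0 ≤ r m n := fun m n => le_trans (hz_pos m n).le (hzr m n)
  have hvr : ∀ m n, v m n ≤ r m n := by
    intro m n
    have h1 : u m n ≤ ∑ i ∈ Finset.range m, ∑ j ∈ Finset.range n, z i j := by
      rw [huD m n]
      exact Finset.sum_le_sum fun i _ => Finset.sum_le_sum fun j _ => hDz i j
    have h2 : D m n ≤ z m n := hDz m n
    simp only [hrdef, hvdef]
    linarith
  -- monotonicity of z and r in n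
  have hz_mono : ∀ m, Monotone (z m) := by
    intro m n₁ n₂ hn
    simp only [hzdef]
    have hb' := hbmono hn
    have hs : ∑ i ∈ Finset.range m, ∑ j ∈ Finset.range n₁, c i j * v i j ≤
        ∑ i ∈ Finset.range m, ∑ j ∈ Finset.range n₂, c i j * v i j := by
      refine Finset.sum_le_sum fun i _ => ?_
      exact Finset.sum_le_sum_of_subset_of_nonneg
        (Finset.range_subset_range.mpr hn)
        (fun j _ _ => mul_nonneg (hc0 i j) (hv_nonneg i j))
    linarith
  have hr_mono : ∀ m, Monotone (r m) := by
    intro m n₁ n₂ hn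
    simp only [hrdef]
    have h1 := hz_mono m hn
    have hs : ∑ i ∈ Finset.range m, ∑ j ∈ Finset.range n₁, z i j ≤
        ∑ i ∈ Finset.range m, ∑ j ∈ Finset.range n₂, z i j := by
      refine Finset.sum_le_sum fun i _ => ?_
      exact Finset.sum_le_sum_of_subset_of_nonneg
        (Finset.range_subset_range.mpr hn) (fun j _ _ => (hz_pos i j).le)
    linarith
  have hp_nonneg : ∀ m n, 0 ≤ p m n := by
    intro m n
    rw [hp m n]
    have h1 : 0 ≤ (a (m+1) - a m) / (a m + b 0) :=
      div_nonneg (sub_nonneg.mpr (hamono (Nat.le_succ m)))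
        (add_pos (ha m) (hb 0)).le
    have h2 : (0:ℝ) ≤ ∑ j ∈ Finset.range n, (1 + c m j) :=
      Finset.sum_nonneg fun j _ => by linarith [hc0 m j]
    linarith
  -- step inequality for r
  have hr_step : ∀ m n, r (m+1) n ≤ (1 + p m n) * r m n := by
    intro m n
    have hz_succ : z (m+1) n = z m n + (a (m+1) - a m) +
        ∑ j ∈ Finset.range n, c m j * v m j := by
      simp only [hzdef, Finset.sum_range_succ]; ring
    have hr_succ : r (m+1) n = r m n + (a (m+1) - a m) +
        ∑ j ∈ Finset.range n, (c m j * v m j + z m j) := by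
      simp only [hrdef, Finset.sum_range_succ, hz_succ, Finset.sum_add_distrib]
      ring
    have hΔa : a (m+1) - a m ≤ (a (m+1) - a m) / (a m + b 0) * r m n := by
      have hpos : 0 < a m + b 0 := add_pos (ha m) (hb 0)
      have hrge : a m + b 0 ≤ r m n := by
        have := hz_ab m n
        have := hzr m n
        have := hbmono (Nat.zero_le n)
        linarith
      have hΔa0 : 0 ≤ a (m+1) - a m := sub_nonneg.mpr (hamono (Nat.le_succ m))
      calc a (m+1) - a m = (a (m+1) - a m) / (a m + b 0) * (a m + b 0) := by
            field_simp
        _ ≤ (a (m+1) - a m) / (a m + b 0) * r m n := by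
            exact mul_le_mul_of_nonneg_left hrge (div_nonneg hΔa0 hpos.le)
    have hsum : ∑ j ∈ Finset.range n, (c m j * v m j + z m j) ≤
        (∑ j ∈ Finset.range n, (1 + c m j)) * r m n := by
      rw [Finset.sum_mul]
      refine Finset.sum_le_sum fun j hj => ?_
      have hj' : j ≤ n := (Finset.mem_range.mp hj).le
      have h1 : v m j ≤ r m n := le_trans (hvr m j) (hr_mono m hj')
      have h2 : z m j ≤ r m n := le_trans (hzr m j) (hr_mono m hj')
      have h3 : c m j * v m j ≤ c m j * r m n := by
        exact mul_le_mul_of_nonneg_left (le_trans (hvr m j) (hr_mono m hj')) (hc0 m j)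
      have : (1 + c m j) * r m n = r m n + c m j * r m n := by ring
      linarith
    rw [hr_succ, hp m n]
    have hexp : (1 + ((a (m+1) - a m) / (a m + b 0) +
        ∑ j ∈ Finset.range n, (1 + c m j))) * r m n =
        r m n + (a (m+1) - a m) / (a m + b 0) * r m n +
        (∑ j ∈ Finset.range n, (1 + c m j)) * r m n := by ring
    rw [hexp]
    exact add_le_add (add_le_add le_rfl hΔa) hsum
  -- Gronwall bound for r
  have hr_bound : ∀ m n, r m n ≤ (a 0 + b n) * ∏ i ∈ Finset.range m, (1 + p i n) := by
    intro m n
    induction m with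
    | zero =>
      simp only [hrdef, hzdef, Finset.range_zero, Finset.sum_empty, Finset.prod_empty]
      simp
    | succ m ih =>
      calc r (m+1) n ≤ (1 + p m n) * r m n := hr_step m n
        _ ≤ (1 + p m n) * ((a 0 + b n) * ∏ i ∈ Finset.range m, (1 + p i n)) := by
            refine mul_le_mul_of_nonneg_left ih ?_
            linarith [hp_nonneg m n]
        _ = (a 0 + b n) * ∏ i ∈ Finset.range (m+1), (1 + p i n) := by
            rw [Finset.prod_range_succ]; ring
  -- conclude z ≤ h, D ≤ h, u ≤ ∑∑ h
  have hcvq : ∀ m n, c m n * v m n ≤ q m n := by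
    intro m n
    rw [hq m n]
    calc c m n * v m n ≤ c m n * ((a 0 + b n) * ∏ i ∈ Finset.range m, (1 + p i n)) :=
          mul_le_mul_of_nonneg_left (le_trans (hvr m n) (hr_bound m n)) (hc0 m n)
      _ = (a 0 + b n) * c m n * ∏ i ∈ Finset.range m, (1 + p i n) := by ring
  have hzh : ∀ m n, z m n ≤ h m n := by
    intro m n
    rw [hh m n]
    simp only [hzdef]
    have : ∑ i ∈ Finset.range m, ∑ j ∈ Finset.range n, c i j * v i j ≤
        ∑ i ∈ Finset.range m, ∑ j ∈ Finset.range n, q i j :=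
      Finset.sum_le_sum fun i _ => Finset.sum_le_sum fun j _ => hcvq i j
    linarith
  intro m n
  rw [huD m n]
  exact Finset.sum_le_sum fun i _ => Finset.sum_le_sum fun j _ =>
    le_trans (hDz i j) (hzh i j)
end

section
/- Let u : [0,∞)² → ℝ be C² with nonnegative mixed partial derivative ∂²u/∂t₁∂t₂ and u(0,t₂) = u(t₁,0) = 0 for all t₁,t₂ ≥ 0. Let c : [0,∞)² → ℝ be continuous nonnegative, and a, b : [0,∞) → ℝ positive C¹ functions with a' ≥ 0 and b' ≥ 0. If ∂²u/∂t₁∂t₂(t₁,t₂) ≤ a(t₁) + b(t₂) + ∫₀^{t₁}∫₀^{t₂} c(s₁,s₂)·(u(s₁,s₂) + ∂²u/∂s₁∂s₂(s₁,s₂)) ds₂ ds₁ for all t₁,t₂ ≥ 0, then u(t₁,t₂) ≤ ∫₀^{t₁}∫₀^{t₂} h(s₁,s₂) ds₂ ds₁, where p(t₁,t₂) = a'(t₁)/(a(t₁)+b(0)) + ∫₀^{t₂}(1+c(t₁,s₂)) ds₂, q(t₁,t₂) = (a(0)+b(t₂))·exp(∫₀^{t₁} p(s₁,t₂) ds₁)·c(t₁,t₂),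 and h(t₁,t₂) = a(t₁)+b(t₂) + ∫₀^{t₁}∫₀^{t₂} q(s₁,s₂) ds₂ ds₁. -/
/-!
Write `u` as the double integral of its mixed partial `u₁₂`. The hypothesis says `u₁₂ ≤ v` with
`v = a + b + ∫∫ c (u + u₁₂)`, hence `u ≤ ∫∫ v` and `u + u₁₂ ≤ z := v + ∫∫ v`. Since `z` is
nondecreasing in `t₂` and at least `a t₁ + b 0`, differentiating in `t₁` gives `∂₁ z ≤ p z`, and
Gronwall's inequality yields `z ≤ (a 0 + b t₂) exp (∫ p)`. Therefore `c (u + u₁₂) ≤ q`, so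
`u₁₂ ≤ v ≤ h` and `u ≤ ∫∫ h`.

The data are extended from the closed quadrant by composing with `max · 0`, which makes every
parametric integral in the argument continuous on the whole plane.
-/

open intervalIntegral Set

open MeasureTheory Topology Function

noncomputable def doublePrimitive (f : ℝ → ℝ → ℝ) (x y : ℝ) : ℝ :=
  ∫ s₁ in (0:ℝ)..x, ∫ s₂ in (0:ℝ)..y, f s₁ s₂

section DoublePrimitive

variable {f g : ℝ → ℝ → ℝ} {x y : ℝ}

lemma continuous_doublePrimitive (hf : Continuous (uncurry f)) :
    Continuous (uncurry (doublePrimitive f)) := by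
  have inner : Continuous (uncurry fun y s₁ => ∫ s₂ in (0:ℝ)..y, f s₁ s₂) :=
    (continuous_parametric_primitive_of_continuous hf).comp continuous_swap
  exact (continuous_parametric_primitive_of_continuous inner).comp continuous_swap

lemma hasDerivAt_doublePrimitive_left (hf : Continuous (uncurry f)) (x y : ℝ) :
    HasDerivAt (doublePrimitive f · y) (∫ s in (0:ℝ)..y, f x s) x :=
  ((continuous_parametric_intervalIntegral_of_continuous' hf 0 y).integral_hasStrictDerivAt
    0 x).hasDerivAt

lemma doublePrimitive_congr (hx : 0 ≤ x) (hy : 0 ≤ y)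
    (h : ∀ s t, 0 < s → 0 < t → f s t = g s t) :
    doublePrimitive f x y = doublePrimitive g x y :=
  integral_congr_Ioo_of_le hx fun s hs =>
    integral_congr_Ioo_of_le hy fun t ht => h s t hs.1 ht.1

lemma doublePrimitive_mono (hx : 0 ≤ x) (hy : 0 ≤ y) (hf : Continuous (uncurry f))
    (hg : Continuous (uncurry g)) (h : ∀ s t, 0 < s → 0 < t → f s t ≤ g s t) :
    doublePrimitive f x y ≤ doublePrimitive g x y := by
  refine integral_mono_on_of_le_Ioo hx
    ((continuous_parametric_intervalIntegral_of_continuous' hf 0 y).intervalIntegrable 0 x)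
    ((continuous_parametric_intervalIntegral_of_continuous' hg 0 y).intervalIntegrable 0 x)
    fun s hs => integral_mono_on_of_le_Ioo hy ?_ ?_ fun t ht => h s t hs.1 ht.1
  · exact (hf.uncurry_left s).intervalIntegrable 0 y
  · exact (hg.uncurry_left s).intervalIntegrable 0 y

lemma doublePrimitive_nonneg (hx : 0 ≤ x) (hy : 0 ≤ y) (hf : Continuous (uncurry f))
    (h : ∀ s t, 0 < s → 0 < t → 0 ≤ f s t) : 0 ≤ doublePrimitive f x y := by
  simpa [doublePrimitive] using doublePrimitive_mono hx hy continuous_const hf h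

lemma doublePrimitive_mono_right (hx : 0 ≤ x) (hy : 0 ≤ y) {y' : ℝ} (hyy' : y ≤ y')
    (hf : Continuous (uncurry f)) (h : ∀ s t, 0 < s → 0 < t → 0 ≤ f s t) :
    doublePrimitive f x y ≤ doublePrimitive f x y' := by
  refine integral_mono_on_of_le_Ioo hx
    ((continuous_parametric_intervalIntegral_of_continuous' hf 0 y).intervalIntegrable 0 x)
    ((continuous_parametric_intervalIntegral_of_continuous' hf 0 y').intervalIntegrable 0 x)
    fun s hs => integral_mono_interval le_rfl hy hyy' ?_
      ((hf.uncurry_left s).intervalIntegrable 0 y')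
  filter_upwards [ae_restrict_mem measurableSet_Ioc] with t ht using h s t hs.1 ht.1

end DoublePrimitive

lemma le_mul_exp_integral_of_hasDerivAt_le_mul {z z' P : ℝ → ℝ} {T : ℝ} (hT : 0 ≤ T)
    (hz : ContinuousOn z (Icc 0 T)) (hP : Continuous P)
    (hz' : ∀ t ∈ Ioo 0 T, HasDerivAt z (z' t) t) (hle : ∀ t ∈ Ioo 0 T, z' t ≤ P t * z t) :
    z T ≤ z 0 * Real.exp (∫ s in (0:ℝ)..T, P s) := by
  set I : ℝ → ℝ := fun t => ∫ s in (0:ℝ)..t, P s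
  have hI : ∀ t, HasDerivAt I (P t) t := fun t => (hP.integral_hasStrictDerivAt 0 t).hasDerivAt
  -- the integrating factor `exp (-I)` makes `z` nonincreasing
  have hanti : AntitoneOn (fun t => z t * Real.exp (-I t)) (Icc 0 T) := by
    have hderiv : ∀ t ∈ Ioo 0 T, HasDerivWithinAt (fun t => z t * Real.exp (-I t))
        ((z' t - P t * z t) * Real.exp (-I t)) (Ioo 0 T) t := fun t ht =>
      ((hz' t ht).mul (hI t).neg.exp).hasDerivWithinAt.congr_deriv (by rw [Pi.neg_apply]; ring)
    refine antitoneOn_of_hasDerivWithinAt_nonpos (convex_Icc 0 T)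
      (hz.mul (continuous_iff_continuousAt.2 fun t => (hI t).neg.exp.continuousAt).continuousOn)
      (by simpa only [interior_Icc] using hderiv) ?_
    simpa only [interior_Icc] using fun t ht =>
      mul_nonpos_of_nonpos_of_nonneg (sub_nonpos.2 (hle t ht)) (Real.exp_pos (-I t)).le
  have h0T := hanti ⟨le_rfl, hT⟩ ⟨hT, le_rfl⟩ hT
  simp only [I, integral_same, neg_zero, Real.exp_zero, mul_one] at h0T
  rwa [← le_div_iff₀ (Real.exp_pos _), Real.exp_neg, div_inv_eq_mul] at h0T

section Partial

variable {E : Type*} [NormedAddCommGroup E] [NormedSpace ℝ E] {g : ℝ × ℝ → E}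
  {L : ℝ × ℝ →L[ℝ] E} {x y : ℝ}

lemma HasFDerivAt.hasDerivAt_partial_fst (h : HasFDerivAt g L (x, y)) :
    HasDerivAt (fun s => g (s, y)) (L (1, 0)) x :=
  h.comp_hasDerivAt x ((hasDerivAt_id x).prodMk (hasDerivAt_const x y))

lemma HasFDerivAt.hasDerivAt_partial_snd (h : HasFDerivAt g L (x, y)) :
    HasDerivAt (fun t => g (x, t)) (L (0, 1)) y :=
  h.comp_hasDerivAt y ((hasDerivAt_const y x).prodMk (hasDerivAt_id y))

end Partial

lemma quadrant_mem_nhds {x y : ℝ} (hx : 0 < x) (hy : 0 < y) :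
    Ici (0:ℝ) ×ˢ Ici (0:ℝ) ∈ 𝓝 (x, y) :=
  prod_mem_nhds (Ici_mem_nhds hx) (Ici_mem_nhds hy)

lemma eq_doublePrimitive_of_hasDerivAt {u F U : ℝ → ℝ → ℝ}
    (hu : ContinuousOn (uncurry u) (Ici 0 ×ˢ Ici 0))
    (hF : ContinuousOn (uncurry F) (Ici 0 ×ˢ Ici 0))
    (hU : Continuous (uncurry U))
    (hdu : ∀ x y, 0 < x → 0 < y → HasDerivAt (u · y) (F x y) x)
    (hdF : ∀ x y, 0 < x → 0 < y → HasDerivAt (F x) (U x y) y)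
    (hu₀ : ∀ y, 0 ≤ y → u 0 y = 0) (hu₀' : ∀ x, 0 ≤ x → u x 0 = 0) (hF₀ : ∀ x, 0 < x → F x 0 = 0)
    {x y : ℝ} (hx : 0 ≤ x) (hy : 0 ≤ y) :
    u x y = doublePrimitive U x y := by
  rcases hy.eq_or_lt with rfl | hy
  · simp [doublePrimitive, hu₀' x hx]
  have hFU : ∀ s, 0 < s → F s y = ∫ t in (0:ℝ)..y, U s t := fun s hs => by
    rw [integral_eq_sub_of_hasDerivAt_of_le (f := F s) hy.le
      (hF.comp (continuous_const.prodMk continuous_id).continuousOn fun t ht => ⟨hs.le, ht.1⟩)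
      (fun t ht => hdF s t hs ht.1) ((hU.uncurry_left s).intervalIntegrable _ _), hF₀ s hs,
      sub_zero]
  calc u x y = ∫ s in (0:ℝ)..x, F s y := by
        rw [integral_eq_sub_of_hasDerivAt_of_le (f := (u · y)) hx
          (hu.comp (continuous_id.prodMk continuous_const).continuousOn fun s hs => ⟨hs.1, hy.le⟩)
          (fun s hs => hdu s y hs.1 hy) ?_, hu₀ y hy.le, sub_zero]
        exact ContinuousOn.intervalIntegrable_of_Icc hx
          (hF.comp (continuous_id.prodMk continuous_const).continuousOn fun s hs => ⟨hs.1, hy.le⟩)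
    _ = doublePrimitive U x y := integral_congr_Ioo_of_le hx fun s hs => hFU s hs.1

lemma ContDiffOn.exists_mixed_partial_eq_doublePrimitive {u : ℝ → ℝ → ℝ}
    (hu : ContDiffOn ℝ 2 (uncurry u) (Ici 0 ×ˢ Ici 0))
    (hu₀ : ∀ y, 0 ≤ y → u 0 y = 0) (hu₀' : ∀ x, 0 ≤ x → u x 0 = 0) :
    ∃ U : ℝ → ℝ → ℝ, Continuous (uncurry U) ∧
      (∀ x y, 0 < x → 0 < y → deriv (fun t => deriv (u · t) x) y = U x y) ∧
      ∀ x y, 0 ≤ x → 0 ≤ y → u x y = doublePrimitive U x y := by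
  set Q : Set (ℝ × ℝ) := Ici 0 ×ˢ Ici 0
  have hQ : UniqueDiffOn ℝ Q := (uniqueDiffOn_Ici 0).prod (uniqueDiffOn_Ici 0)
  set F := fderivWithin ℝ (uncurry u) Q
  set G := fderivWithin ℝ F Q
  have hF : ContDiffOn ℝ 1 F Q := hu.fderivWithin hQ (by norm_num)
  have hGc : ContinuousOn (fun z => G z (0, 1) (1, 0)) Q :=
    ((hF.continuousOn_fderivWithin hQ le_rfl).clm_apply continuousOn_const).clm_apply
      continuousOn_const
  have hd1 : ∀ x y, 0 < x → 0 < y → HasDerivAt (u · y) (F (x, y) (1, 0)) x := fun x y hx hy =>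
    ((hu.differentiableOn two_ne_zero (x, y) ⟨hx.le, hy.le⟩).hasFDerivWithinAt.hasFDerivAt
      (quadrant_mem_nhds hx hy)).hasDerivAt_partial_fst
  have hd2 : ∀ x y, 0 < x → 0 < y →
      HasDerivAt (fun t => F (x, t) (1, 0)) (G (x, y) (0, 1) (1, 0)) y := fun x y hx hy =>
    (((hF.differentiableOn one_ne_zero (x, y) ⟨hx.le, hy.le⟩).hasFDerivWithinAt.hasFDerivAt
      (quadrant_mem_nhds hx hy)).hasDerivAt_partial_snd).clm_apply (hasDerivAt_const y (1, 0))
      |>.congr_deriv (by rw [map_zero, add_zero])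
  have hF₀ : ∀ x, 0 < x → F (x, 0) (1, 0) = 0 := fun x hx => by
    have hline : MapsTo (fun s : ℝ => (s, (0:ℝ))) (Ici 0) Q := fun s hs => ⟨hs, le_refl (0:ℝ)⟩
    have hdu : HasFDerivWithinAt (uncurry u) (F (x, 0)) Q (x, 0) :=
      (hu.differentiableOn two_ne_zero _ (hline hx.le)).hasFDerivWithinAt
    have h : HasDerivAt (u · 0) (F (x, 0) (1, 0)) x :=
      (hdu.comp_hasDerivWithinAt (f := fun s : ℝ => (s, (0:ℝ))) x ((hasDerivAt_id' x).prodMk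
        (hasDerivAt_const x (0:ℝ))).hasDerivWithinAt hline).hasDerivAt (Ici_mem_nhds hx)
    refine h.unique ((hasDerivAt_const x 0).congr_of_eventuallyEq ?_)
    filter_upwards [Ioi_mem_nhds hx] with s hs using hu₀' s hs.le
  have hU : Continuous (uncurry fun x y => G (max x 0, max y 0) (0, 1) (1, 0)) :=
    hGc.comp_continuous (by fun_prop) fun z => ⟨le_max_right z.1 0, le_max_right z.2 0⟩
  refine ⟨fun x y => G (max x 0, max y 0) (0, 1) (1, 0), hU, fun x y hx hy => ?_,
    fun x y hx hy => ?_⟩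
  · simp only [max_eq_left hx.le, max_eq_left hy.le]
    refine ((hd2 x y hx hy).congr_of_eventuallyEq ?_).deriv
    filter_upwards [Ioi_mem_nhds hy] with t ht using (hd1 x t hx ht).deriv
  · refine eq_doublePrimitive_of_hasDerivAt (F := fun x y => F (x, y) (1, 0)) hu.continuousOn
      ((hF.continuousOn.clm_apply continuousOn_const).comp (by fun_prop) fun z hz => hz)
      hU hd1 (fun x y hx hy => ?_) hu₀ hu₀' hF₀ hx hy
    simpa only [max_eq_left hx.le, max_eq_left hy.le] using hd2 x y hx hy

namespace Pachpatte

variable (A B A' : ℝ → ℝ) (C U : ℝ → ℝ → ℝ)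

/-! With `u = doublePrimitive U` and `U = u₁₂`: `source` is `c (u + u₁₂)`, `forcing` is `v`,
`majorant` is `z`, and `rate y`, `kernel`, `bound` are `p (·, y)`, `q`, `h`. -/

noncomputable def source (x y : ℝ) : ℝ := C x y * (doublePrimitive U x y + U x y)

noncomputable def forcing (x y : ℝ) : ℝ := A x + B y + doublePrimitive (source C U) x y

noncomputable def majorant (x y : ℝ) : ℝ :=
  forcing A B C U x y + doublePrimitive (forcing A B C U) x y

noncomputable def rate (y x : ℝ) : ℝ := A' x / (A x + B 0) + ∫ w in (0:ℝ)..y, (1 + C x w)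

noncomputable def kernel (x y : ℝ) : ℝ :=
  (A 0 + B y) * Real.exp (∫ r in (0:ℝ)..x, rate A B A' C y r) * C x y

noncomputable def bound (x y : ℝ) : ℝ := A x + B y + doublePrimitive (kernel A B A' C) x y

structure Coefficients : Prop where
  continuous_A : Continuous A
  continuous_B : Continuous B
  continuous_A' : Continuous A'
  continuous_C : Continuous (uncurry C)
  hasDerivAt_A : ∀ x, 0 < x → HasDerivAt A (A' x) x
  A'_nonneg : ∀ x, 0 < x → 0 ≤ A' x
  monotoneOn_B : MonotoneOn B (Ici 0)
  A_add_B_zero_pos : ∀ x, 0 < A x + B 0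
  C_nonneg : ∀ x y, 0 < x → 0 < y → 0 ≤ C x y

structure Assumptions : Prop extends Coefficients A B A' C where
  continuous_U : Continuous (uncurry U)
  U_nonneg : ∀ x y, 0 < x → 0 < y → 0 ≤ U x y
  U_le_forcing : ∀ x y, 0 < x → 0 < y → U x y ≤ forcing A B C U x y

variable {A B A' C U} {x y : ℝ}

namespace Assumptions

lemma continuous_source (H : Assumptions A B A' C U) : Continuous (uncurry (source C U)) :=
  H.continuous_C.mul ((continuous_doublePrimitive H.continuous_U).add H.continuous_U)

lemma source_nonneg (H : Assumptions A B A' C U) (hx : 0 < x) (hy : 0 < y) : 0 ≤ source C U x y :=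
  mul_nonneg (H.C_nonneg x y hx hy) (add_nonneg
    (doublePrimitive_nonneg hx.le hy.le H.continuous_U H.U_nonneg) (H.U_nonneg x y hx hy))

lemma continuous_forcing (H : Assumptions A B A' C U) : Continuous (uncurry (forcing A B C U)) :=
  ((H.continuous_A.comp continuous_fst).add (H.continuous_B.comp continuous_snd)).add
    (continuous_doublePrimitive H.continuous_source)

lemma add_le_forcing (H : Assumptions A B A' C U) (hx : 0 ≤ x) (hy : 0 ≤ y) :
    A x + B 0 ≤ forcing A B C U x y := by
  have hB := H.monotoneOn_B self_mem_Ici hy hy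
  have hsource := doublePrimitive_nonneg hx hy H.continuous_source fun _ _ => H.source_nonneg
  rw [forcing]
  linarith

lemma forcing_pos (H : Assumptions A B A' C U) (hx : 0 ≤ x) (hy : 0 ≤ y) :
    0 < forcing A B C U x y :=
  (H.A_add_B_zero_pos x).trans_le (H.add_le_forcing hx hy)

lemma continuous_majorant (H : Assumptions A B A' C U) : Continuous (uncurry (majorant A B C U)) :=
  H.continuous_forcing.add (continuous_doublePrimitive H.continuous_forcing)

lemma forcing_le_majorant (H : Assumptions A B A' C U) (hx : 0 ≤ x) (hy : 0 ≤ y) :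
    forcing A B C U x y ≤ majorant A B C U x y :=
  le_add_of_nonneg_right (doublePrimitive_nonneg hx hy H.continuous_forcing
    fun _ _ hs ht => (H.forcing_pos hs.le ht.le).le)

lemma majorant_mono_right (H : Assumptions A B A' C U) (hx : 0 ≤ x) (hy : 0 ≤ y) {y' : ℝ}
    (hyy' : y ≤ y') :
    majorant A B C U x y ≤ majorant A B C U x y' := by
  have hB := H.monotoneOn_B hy (hy.trans hyy') hyy'
  have hsource := doublePrimitive_mono_right hx hy hyy' H.continuous_source
    fun _ _ => H.source_nonneg
  have hforcing := doublePrimitive_mono_right hx hy hyy' H.continuous_forcing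
    fun _ _ hs ht => (H.forcing_pos hs.le ht.le).le
  simp only [majorant, forcing] at hforcing ⊢
  linarith

lemma doublePrimitive_add_le_majorant (H : Assumptions A B A' C U) (hx : 0 < x) (hy : 0 < y) :
    doublePrimitive U x y + U x y ≤ majorant A B C U x y := by
  rw [majorant, add_comm (forcing A B C U x y)]
  exact add_le_add (doublePrimitive_mono hx.le hy.le H.continuous_U H.continuous_forcing
    H.U_le_forcing) (H.U_le_forcing x y hx hy)

lemma source_le_mul_majorant (H : Assumptions A B A' C U) (hx : 0 < x) (hy : 0 < y) :
    source C U x y ≤ C x y * majorant A B C U x y :=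
  mul_le_mul_of_nonneg_left (H.doublePrimitive_add_le_majorant hx hy) (H.C_nonneg x y hx hy)

lemma hasDerivAt_majorant_left (H : Assumptions A B A' C U) (hx : 0 < x) (y : ℝ) :
    HasDerivAt (majorant A B C U · y)
      (A' x + (∫ t in (0:ℝ)..y, source C U x t) + ∫ t in (0:ℝ)..y, forcing A B C U x t) x :=
  (((H.hasDerivAt_A x hx).add_const (B y)).add
    (hasDerivAt_doublePrimitive_left H.continuous_source x y)).add
    (hasDerivAt_doublePrimitive_left H.continuous_forcing x y)

lemma deriv_majorant_left_le (H : Assumptions A B A' C U) (hx : 0 < x) (hy : 0 < y) :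
    A' x + (∫ t in (0:ℝ)..y, source C U x t) + ∫ t in (0:ℝ)..y, forcing A B C U x t ≤
      rate A B A' C y x * majorant A B C U x y := by
  have hZ : A x + B 0 ≤ majorant A B C U x y :=
    (H.add_le_forcing hx.le hy.le).trans (H.forcing_le_majorant hx.le hy.le)
  have hA' : A' x ≤ A' x / (A x + B 0) * majorant A B C U x y := by
    rw [div_mul_eq_mul_div, le_div_iff₀ (H.A_add_B_zero_pos x)]
    exact mul_le_mul_of_nonneg_left hZ (H.A'_nonneg x hx)
  -- `majorant` is nondecreasing in `y`, so it can be pulled out of the `t`-integrals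
  have hint : (∫ t in (0:ℝ)..y, source C U x t) + ∫ t in (0:ℝ)..y, forcing A B C U x t ≤
      ∫ t in (0:ℝ)..y, (1 + C x t) * majorant A B C U x y := by
    rw [← integral_add ((H.continuous_source.uncurry_left x).intervalIntegrable 0 y)
      ((H.continuous_forcing.uncurry_left x).intervalIntegrable 0 y)]
    refine integral_mono_on_of_le_Ioo hy.le
      (((H.continuous_source.uncurry_left x).add
        (H.continuous_forcing.uncurry_left x)).intervalIntegrable 0 y)
      (((continuous_const.add (H.continuous_C.uncurry_left x)).mul
        continuous_const).intervalIntegrable 0 y) fun t ht => ?_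
    have hZt := H.majorant_mono_right hx.le ht.1.le ht.2.le
    have hsource := (H.source_le_mul_majorant hx ht.1).trans
      (mul_le_mul_of_nonneg_left hZt (H.C_nonneg x t hx ht.1))
    have hforcing := (H.forcing_le_majorant hx.le ht.1.le).trans hZt
    linarith
  rw [intervalIntegral.integral_mul_const] at hint
  rw [rate, add_mul]
  linarith

lemma continuous_rate (H : Assumptions A B A' C U) : Continuous (uncurry (rate A B A' C)) :=
  ((H.continuous_A'.div (H.continuous_A.add continuous_const)
    fun x => (H.A_add_B_zero_pos x).ne').comp continuous_snd).add
    ((continuous_parametric_primitive_of_continuous (f := fun x w => 1 + C x w) (a₀ := 0)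
      (continuous_const.add H.continuous_C : Continuous fun p : ℝ × ℝ => 1 + C p.1 p.2)).comp
        continuous_swap)

lemma majorant_le (H : Assumptions A B A' C U) (hx : 0 ≤ x) (hy : 0 < y) :
    majorant A B C U x y ≤ (A 0 + B y) * Real.exp (∫ r in (0:ℝ)..x, rate A B A' C y r) := by
  have h := le_mul_exp_integral_of_hasDerivAt_le_mul hx
    (H.continuous_majorant.uncurry_right y).continuousOn (H.continuous_rate.uncurry_left y)
    (fun t ht => H.hasDerivAt_majorant_left ht.1 y) fun t ht => H.deriv_majorant_left_le ht.1 hy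
  simpa [majorant, forcing, doublePrimitive] using h

lemma continuous_kernel (H : Assumptions A B A' C U) : Continuous (uncurry (kernel A B A' C)) :=
  ((continuous_const.add (H.continuous_B.comp continuous_snd)).mul (Real.continuous_exp.comp
    ((continuous_parametric_primitive_of_continuous (a₀ := 0) H.continuous_rate).comp
      continuous_swap))).mul
    H.continuous_C

lemma source_le_kernel (H : Assumptions A B A' C U) (hx : 0 < x) (hy : 0 < y) :
    source C U x y ≤ kernel A B A' C x y :=
  calc source C U x y ≤ C x y * majorant A B C U x y := H.source_le_mul_majorant hx hy
    _ ≤ C x y * ((A 0 + B y) * Real.exp (∫ r in (0:ℝ)..x, rate A B A' C y r)) :=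
      mul_le_mul_of_nonneg_left (H.majorant_le hx.le hy) (H.C_nonneg x y hx hy)
    _ = kernel A B A' C x y := by rw [kernel]; ring

lemma continuous_bound (H : Assumptions A B A' C U) : Continuous (uncurry (bound A B A' C)) :=
  ((H.continuous_A.comp continuous_fst).add (H.continuous_B.comp continuous_snd)).add
    (continuous_doublePrimitive H.continuous_kernel)

lemma U_le_bound (H : Assumptions A B A' C U) (hx : 0 < x) (hy : 0 < y) :
    U x y ≤ bound A B A' C x y :=
  (H.U_le_forcing x y hx hy).trans (add_le_add le_rfl (doublePrimitive_mono hx.le hy.le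
    H.continuous_source H.continuous_kernel fun _ _ => H.source_le_kernel))

lemma doublePrimitive_le_bound (H : Assumptions A B A' C U) (hx : 0 ≤ x) (hy : 0 ≤ y) :
    doublePrimitive U x y ≤ doublePrimitive (bound A B A' C) x y :=
  doublePrimitive_mono hx hy H.continuous_U H.continuous_bound fun _ _ => H.U_le_bound

end Assumptions

lemma coefficients_comp_max {a b : ℝ → ℝ} {c : ℝ → ℝ → ℝ} (ha : ContDiffOn ℝ 1 a (Ici 0))
    (hb : ContDiffOn ℝ 1 b (Ici 0)) (hc : ContinuousOn (uncurry c) (Ici (0:ℝ) ×ˢ Ici (0:ℝ)))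
    (hc0 : ∀ x y, 0 ≤ x → 0 ≤ y → 0 ≤ c x y) (ha0 : ∀ x, 0 ≤ x → 0 < a x)
    (hb0 : ∀ y, 0 ≤ y → 0 < b y) (ha' : ∀ x, 0 ≤ x → 0 ≤ deriv a x)
    (hb' : ∀ y, 0 ≤ y → 0 ≤ deriv b y) :
    Coefficients (fun x => a (max x 0)) (fun y => b (max y 0))
      (fun x => derivWithin a (Ici 0) (max x 0)) (fun x y => c (max x 0) (max y 0)) := by
  have hmax : Continuous fun x : ℝ => max x 0 := continuous_id.max continuous_const
  have hderiv : ∀ x, 0 < x → derivWithin a (Ici 0) x = deriv a x := fun x hx =>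
    derivWithin_of_mem_nhds (Ici_mem_nhds hx)
  refine ⟨ha.continuousOn.comp_continuous hmax fun x => le_max_right x 0,
    hb.continuousOn.comp_continuous hmax fun x => le_max_right x 0,
    (ha.continuousOn_derivWithin (uniqueDiffOn_Ici 0) le_rfl).comp_continuous hmax
      fun x => le_max_right x 0,
    hc.comp_continuous (hmax.prodMap hmax) fun z => ⟨le_max_right z.1 0, le_max_right z.2 0⟩,
    fun x hx => ?_, fun x hx => ?_, ?_, fun x => ?_, fun x y hx hy => ?_⟩
  · have hax : HasDerivAt a (deriv a x) x :=
      ((ha.differentiableOn one_ne_zero x hx.le).differentiableAt (Ici_mem_nhds hx)).hasDerivAt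
    rw [max_eq_left hx.le, hderiv x hx]
    refine hax.congr_of_eventuallyEq ?_
    filter_upwards [Ioi_mem_nhds hx] with s hs using by rw [max_eq_left hs.le]
  · rw [max_eq_left hx.le, hderiv x hx]
    exact ha' x hx.le
  · have hbmono : MonotoneOn b (Ici 0) := by
      refine monotoneOn_of_deriv_nonneg (convex_Ici 0) hb.continuousOn ?_ ?_ <;>
        rw [interior_Ici]
      · exact fun x hx => ((hb.differentiableOn one_ne_zero x (mem_Ici_of_Ioi hx)).differentiableAt
          (Ici_mem_nhds hx)).differentiableWithinAt
      · exact fun x hx => hb' x (le_of_lt hx)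
    intro x hx y hy hxy
    simp only [max_eq_left (mem_Ici.1 hx), max_eq_left (mem_Ici.1 hy)]
    exact hbmono hx hy hxy
  · exact add_pos (ha0 _ (le_max_right x 0)) (hb0 _ (le_max_right 0 0))
  · exact hc0 _ _ (le_max_right x 0) (le_max_right y 0)

lemma bound_comp_max_eq {a b : ℝ → ℝ} {c p q h : ℝ → ℝ → ℝ}
    (hp : ∀ t₁ t₂ : ℝ, p t₁ t₂ = deriv a t₁ / (a t₁ + b 0) + ∫ s₂ in (0:ℝ)..t₂, (1 + c t₁ s₂))
    (hq : ∀ t₁ t₂ : ℝ, q t₁ t₂ =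
      (a 0 + b t₂) * Real.exp (∫ s₁ in (0:ℝ)..t₁, p s₁ t₂) * c t₁ t₂)
    (hh : ∀ t₁ t₂ : ℝ, h t₁ t₂ = a t₁ + b t₂ +
      ∫ s₁ in (0:ℝ)..t₁, ∫ s₂ in (0:ℝ)..t₂, q s₁ s₂)
    {x y : ℝ} (hx : 0 < x) (hy : 0 < y) :
    bound (fun x => a (max x 0)) (fun y => b (max y 0))
      (fun x => derivWithin a (Ici 0) (max x 0)) (fun x y => c (max x 0) (max y 0)) x y =
      h x y := by
  have hrate : ∀ r, 0 < r → ∀ t, 0 < t → rate (fun x => a (max x 0)) (fun y => b (max y 0))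
      (fun x => derivWithin a (Ici 0) (max x 0)) (fun x y => c (max x 0) (max y 0)) t r =
      p r t := fun r hr t ht => by
    rw [rate, hp, max_eq_left hr.le, max_self, derivWithin_of_mem_nhds (Ici_mem_nhds hr)]
    congr 1
    exact integral_congr_Ioo_of_le ht.le fun w hw => by
      rw [max_eq_left hw.1.le]
  have hkernel : ∀ s t, 0 < s → 0 < t → kernel (fun x => a (max x 0)) (fun y => b (max y 0))
      (fun x => derivWithin a (Ici 0) (max x 0)) (fun x y => c (max x 0) (max y 0)) s t =
      q s t := fun s t hs ht => by
    rw [kernel, hq, integral_congr_Ioo_of_le hs.le fun r hr => hrate r hr.1 t ht]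
    simp only [max_self, max_eq_left hs.le, max_eq_left ht.le]
  rw [bound, hh, doublePrimitive_congr hx.le hy.le hkernel, max_eq_left hx.le, max_eq_left hy.le]
  rfl

end Pachpatte

theorem pachpatte_integrodifferential_real
    (u c : ℝ → ℝ → ℝ) (a b : ℝ → ℝ)
    (huC2 : ContDiffOn ℝ 2 (fun z : ℝ × ℝ => u z.1 z.2) (Ici 0 ×ˢ Ici 0))
    (u₁₂ : ℝ → ℝ → ℝ)
    (hu₁₂ : ∀ t₁ t₂ : ℝ, u₁₂ t₁ t₂ = deriv (fun y => deriv (fun x => u x y) t₁) t₂)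
    (hu₁₂0 : ∀ t₁ t₂ : ℝ, 0 ≤ t₁ → 0 ≤ t₂ → 0 ≤ u₁₂ t₁ t₂)
    (hubd : ∀ t₁ t₂ : ℝ, 0 ≤ t₁ → 0 ≤ t₂ → u 0 t₂ = 0 ∧ u t₁ 0 = 0)
    (hcc : ContinuousOn (fun z : ℝ × ℝ => c z.1 z.2) (Ici 0 ×ˢ Ici 0))
    (hc0 : ∀ t₁ t₂ : ℝ, 0 ≤ t₁ → 0 ≤ t₂ → 0 ≤ c t₁ t₂)
    (haC1 : ContDiffOn ℝ 1 a (Ici 0)) (hbC1 : ContDiffOn ℝ 1 b (Ici 0))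
    (hapos : ∀ t₁ : ℝ, 0 ≤ t₁ → 0 < a t₁) (hbpos : ∀ t₂ : ℝ, 0 ≤ t₂ → 0 < b t₂)
    (ha' : ∀ t₁ : ℝ, 0 ≤ t₁ → 0 ≤ deriv a t₁)
    (hb' : ∀ t₂ : ℝ, 0 ≤ t₂ → 0 ≤ deriv b t₂)
    (hineq : ∀ t₁ t₂ : ℝ, 0 ≤ t₁ → 0 ≤ t₂ →
      u₁₂ t₁ t₂ ≤ a t₁ + b t₂ +
        ∫ s₁ in (0:ℝ)..t₁, ∫ s₂ in (0:ℝ)..t₂, c s₁ s₂ * (u s₁ s₂ + u₁₂ s₁ s₂))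
    (p q h : ℝ → ℝ → ℝ)
    (hp : ∀ t₁ t₂ : ℝ, p t₁ t₂ = deriv a t₁ / (a t₁ + b 0) +
      ∫ s₂ in (0:ℝ)..t₂, (1 + c t₁ s₂))
    (hq : ∀ t₁ t₂ : ℝ, q t₁ t₂ =
      (a 0 + b t₂) * Real.exp (∫ s₁ in (0:ℝ)..t₁, p s₁ t₂) * c t₁ t₂)
    (hh : ∀ t₁ t₂ : ℝ, h t₁ t₂ = a t₁ + b t₂ +
      ∫ s₁ in (0:ℝ)..t₁, ∫ s₂ in (0:ℝ)..t₂, q s₁ s₂) :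
    ∀ t₁ t₂ : ℝ, 0 ≤ t₁ → 0 ≤ t₂ →
      u t₁ t₂ ≤ ∫ s₁ in (0:ℝ)..t₁, ∫ s₂ in (0:ℝ)..t₂, h s₁ s₂ := by
  intro t₁ t₂ ht₁ ht₂
  obtain ⟨U, hUc, hUu, huU⟩ := huC2.exists_mixed_partial_eq_doublePrimitive
    (fun t ht => (hubd 0 t le_rfl ht).1) (fun t ht => (hubd t 0 ht le_rfl).2)
  have hU : ∀ x y, 0 < x → 0 < y → U x y = u₁₂ x y := fun x y hx hy => by
    rw [hu₁₂, hUu x y hx hy]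
  have H : Pachpatte.Assumptions (fun x => a (max x 0)) (fun y => b (max y 0))
      (fun x => derivWithin a (Ici 0) (max x 0)) (fun x y => c (max x 0) (max y 0)) U :=
    { Pachpatte.coefficients_comp_max haC1 hbC1 hcc hc0 hapos hbpos ha' hb' with
      continuous_U := hUc
      U_nonneg := fun x y hx hy => hU x y hx hy ▸ hu₁₂0 x y hx.le hy.le
      U_le_forcing := fun x y hx hy => by
        rw [hU x y hx hy, Pachpatte.forcing, max_eq_left hx.le, max_eq_left hy.le]
        refine (hineq x y hx.le hy.le).trans_eq (congrArg _ ?_)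
        refine doublePrimitive_congr hx.le hy.le fun s t hs ht => ?_
        rw [Pachpatte.source, max_eq_left hs.le, max_eq_left ht.le, hU s t hs ht,
          huU s t hs.le ht.le] }
  calc u t₁ t₂ = doublePrimitive U t₁ t₂ := huU t₁ t₂ ht₁ ht₂
    _ ≤ _ := H.doublePrimitive_le_bound ht₁ ht₂
    _ = _ := doublePrimitive_congr ht₁ ht₂ fun x y hx hy =>
      Pachpatte.bound_comp_max_eq hp hq hh hx hy
end

section
/- Let u, k : [0,∞)² → ℝ be continuous nonnegative and c ≥ 0. If u(t₁,t₂) ≤ c + ∫₀^{t₁}∫₀^{t₂} k(s₁,s₂)·u(s₁,s₂) ds₂ ds₁ for all t₁,t₂ ≥ 0, then u(t₁,t₂) ≤ c·exp(∫₀^{t₁}∫₀^{t₂} k(s₁,s₂) ds₂ ds₁) for all t₁,t₂ ≥ 0. -/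
/-!
Fix `t₂` and let `v t = c + ∫₀ᵗ ∫₀^{t₂} k u`. Since `k u ≥ 0`, the hypothesis gives `u t y ≤ v t`
for `y ≤ t₂`, hence `v' t ≤ K t * v t` with `K t = ∫₀^{t₂} k t y dy`. The integrating factor
`exp (-∫₀ᵗ K)` turns this into the monotonicity of `v t * exp (-∫₀ᵗ K)`, so
`u t₁ t₂ ≤ v t₁ ≤ c * exp (∫₀^{t₁} K)`. Clamping the arguments at `0` reduces the statement on the
quadrant to globally continuous `u` and `k`.
-/

open intervalIntegral Set Function Real

theorem le_mul_exp_integral_of_hasDerivAt_le_mul_s14 {v v' K : ℝ → ℝ} {a b : ℝ}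
    (hK : Continuous K) (hv : ∀ t, HasDerivAt v (v' t) t)
    (hle : ∀ t ∈ Ioo a b, v' t ≤ K t * v t) (hab : a ≤ b) :
    v b ≤ v a * exp (∫ t in a..b, K t) := by
  set I : ℝ → ℝ := fun s => ∫ r in a..s, K r
  have hI : ∀ t, HasDerivAt I (K t) t := fun t =>
    integral_hasDerivAt_right (hK.intervalIntegrable _ _) (hK.stronglyMeasurableAtFilter _ _)
      hK.continuousAt
  have hφ : ∀ t, HasDerivAt (fun s => v s * exp (-I s))
      ((v' t - K t * v t) * exp (-I t)) t := fun t =>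
    ((hv t).mul (hI t).neg.exp).congr_deriv (by rw [Pi.neg_apply]; ring)
  have hanti : AntitoneOn (fun s => v s * exp (-I s)) (Icc a b) :=
    antitoneOn_of_hasDerivWithinAt_nonpos (convex_Icc a b)
      (fun t _ => (hφ t).continuousAt.continuousWithinAt)
      (fun t _ => (hφ t).hasDerivWithinAt)
      (fun t ht => by
        rw [interior_Icc] at ht
        exact mul_nonpos_of_nonpos_of_nonneg (sub_nonpos.2 (hle t ht)) (exp_pos _).le)
  have hba : v b * exp (-I b) ≤ v a := by
    simpa [I] using hanti (left_mem_Icc.2 hab) (right_mem_Icc.2 hab) hab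
  calc v b = v b * exp (-I b) * exp (I b) := by
        rw [mul_assoc, ← exp_add, neg_add_cancel, exp_zero, mul_one]
    _ ≤ v a * exp (I b) := by gcongr

theorem integral_integral_le_of_le_right {f : ℝ → ℝ → ℝ} (hf : Continuous (uncurry f))
    {a₀ a b₀ b b' : ℝ} (hf0 : ∀ x ∈ Icc a₀ a, ∀ y ∈ Icc b₀ b', 0 ≤ f x y)
    (ha : a₀ ≤ a) (hb : b₀ ≤ b) (hbb' : b ≤ b') :
    ∫ x in a₀..a, ∫ y in b₀..b, f x y ≤ ∫ x in a₀..a, ∫ y in b₀..b', f x y := by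
  refine integral_mono_on ha ?_ ?_ fun x hx => ?_
  · exact (continuous_parametric_intervalIntegral_of_continuous' hf _ _).intervalIntegrable _ _
  · exact (continuous_parametric_intervalIntegral_of_continuous' hf _ _).intervalIntegrable _ _
  refine integral_mono_interval le_rfl hb hbb' ?_ ?_
  · exact MeasureTheory.ae_restrict_of_forall_mem measurableSet_Ioc fun y hy =>
      hf0 x hx y (Ioc_subset_Icc_self hy)
  · exact (hf.comp (Continuous.prodMk_right x)).intervalIntegrable _ _

theorem wendroff_of_continuous {u k : ℝ → ℝ → ℝ} (c : ℝ)
    (hu : Continuous (uncurry u)) (hk : Continuous (uncurry k))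
    (hu0 : ∀ t₁ t₂ : ℝ, 0 ≤ t₁ → 0 ≤ t₂ → 0 ≤ u t₁ t₂)
    (hk0 : ∀ t₁ t₂ : ℝ, 0 ≤ t₁ → 0 ≤ t₂ → 0 ≤ k t₁ t₂)
    (hineq : ∀ t₁ t₂ : ℝ, 0 ≤ t₁ → 0 ≤ t₂ →
      u t₁ t₂ ≤ c + ∫ s₁ in (0:ℝ)..t₁, ∫ s₂ in (0:ℝ)..t₂, k s₁ s₂ * u s₁ s₂)
    {t₁ t₂ : ℝ} (ht₁ : 0 ≤ t₁) (ht₂ : 0 ≤ t₂) :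
    u t₁ t₂ ≤ c * exp (∫ s₁ in (0:ℝ)..t₁, ∫ s₂ in (0:ℝ)..t₂, k s₁ s₂) := by
  have hku : Continuous (uncurry fun s y => k s y * u s y) := hk.mul hu
  set g : ℝ → ℝ := fun s => ∫ y in (0:ℝ)..t₂, k s y * u s y
  set K : ℝ → ℝ := fun s => ∫ y in (0:ℝ)..t₂, k s y
  set v : ℝ → ℝ := fun t => c + ∫ s in (0:ℝ)..t, g s
  have hg : Continuous g := continuous_parametric_intervalIntegral_of_continuous' hku _ _
  have hv : ∀ t, HasDerivAt v (g t) t := fun t =>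
    (integral_hasDerivAt_right (hg.intervalIntegrable _ _) (hg.stronglyMeasurableAtFilter _ _)
      hg.continuousAt).const_add c
  have hu_le_v : ∀ t, 0 ≤ t → ∀ y ∈ Icc (0:ℝ) t₂, u t y ≤ v t := fun t ht y hy =>
    (hineq t y ht hy.1).trans <| add_le_add_right (integral_integral_le_of_le_right hku
      (fun x hx z hz => mul_nonneg (hk0 x z hx.1 hz.1) (hu0 x z hx.1 hz.1)) ht hy.1 hy.2) c
  have hg_le : ∀ t ∈ Ioo (0:ℝ) t₁, g t ≤ K t * v t := fun t ht =>
    calc g t ≤ ∫ y in (0:ℝ)..t₂, k t y * v t :=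
          integral_mono_on ht₂ ((hku.comp (Continuous.prodMk_right t)).intervalIntegrable _ _)
            ((hk.comp (Continuous.prodMk_right t)).mul continuous_const |>.intervalIntegrable _ _)
            fun y hy => mul_le_mul_of_nonneg_left (hu_le_v t ht.1.le y hy) (hk0 t y ht.1.le hy.1)
      _ = K t * v t := integral_mul_const _ _
  have hK : Continuous K := continuous_parametric_intervalIntegral_of_continuous' hk _ _
  calc u t₁ t₂ ≤ v t₁ := hu_le_v t₁ ht₁ t₂ ⟨ht₂, le_rfl⟩
    _ ≤ v 0 * exp (∫ s in (0:ℝ)..t₁, K s) :=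
        le_mul_exp_integral_of_hasDerivAt_le_mul_s14 hK hv hg_le ht₁
    _ = c * exp (∫ s₁ in (0:ℝ)..t₁, ∫ s₂ in (0:ℝ)..t₂, k s₁ s₂) := by simp [v, K]

theorem continuous_uncurry_max_zero {f : ℝ → ℝ → ℝ}
    (hf : ContinuousOn (uncurry f) (Ici 0 ×ˢ Ici 0)) :
    Continuous (uncurry fun x y => f (max x 0) (max y 0)) :=
  hf.comp_continuous (f := fun w : ℝ × ℝ => (max w.1 0, max w.2 0)) (by fun_prop)
    fun w => ⟨le_max_right w.1 0, le_max_right w.2 0⟩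

theorem integral_integral_max_zero (f : ℝ → ℝ → ℝ) {t₁ t₂ : ℝ} (ht₁ : 0 ≤ t₁) (ht₂ : 0 ≤ t₂) :
    ∫ s₁ in (0:ℝ)..t₁, ∫ s₂ in (0:ℝ)..t₂, f (max s₁ 0) (max s₂ 0) =
      ∫ s₁ in (0:ℝ)..t₁, ∫ s₂ in (0:ℝ)..t₂, f s₁ s₂ := by
  refine integral_congr fun s₁ hs₁ => integral_congr fun s₂ hs₂ => ?_
  rw [uIcc_of_le ht₁] at hs₁
  rw [uIcc_of_le ht₂] at hs₂
  simp only [max_eq_left hs₁.1, max_eq_left hs₂.1]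

theorem wendroff_real_general
    (u k : ℝ → ℝ → ℝ) (c : ℝ)
    (hu : ContinuousOn (fun w : ℝ × ℝ => u w.1 w.2) (Ici 0 ×ˢ Ici 0))
    (hk : ContinuousOn (fun w : ℝ × ℝ => k w.1 w.2) (Ici 0 ×ˢ Ici 0))
    (hu0 : ∀ t₁ t₂ : ℝ, 0 ≤ t₁ → 0 ≤ t₂ → 0 ≤ u t₁ t₂)
    (hk0 : ∀ t₁ t₂ : ℝ, 0 ≤ t₁ → 0 ≤ t₂ → 0 ≤ k t₁ t₂)
    (hineq : ∀ t₁ t₂ : ℝ, 0 ≤ t₁ → 0 ≤ t₂ →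
      u t₁ t₂ ≤ c + ∫ s₁ in (0:ℝ)..t₁, ∫ s₂ in (0:ℝ)..t₂, k s₁ s₂ * u s₁ s₂) :
    ∀ t₁ t₂ : ℝ, 0 ≤ t₁ → 0 ≤ t₂ →
      u t₁ t₂ ≤ c * Real.exp (∫ s₁ in (0:ℝ)..t₁, ∫ s₂ in (0:ℝ)..t₂, k s₁ s₂) := by
  intro t₁ t₂ ht₁ ht₂
  have key := wendroff_of_continuous (u := fun x y => u (max x 0) (max y 0))
    (k := fun x y => k (max x 0) (max y 0)) c
    (continuous_uncurry_max_zero hu) (continuous_uncurry_max_zero hk)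
    (fun x y _ _ => hu0 _ _ (le_max_right x 0) (le_max_right y 0))
    (fun x y _ _ => hk0 _ _ (le_max_right x 0) (le_max_right y 0))
    (fun s₁ s₂ hs₁ hs₂ => by
      simpa only [max_eq_left hs₁, max_eq_left hs₂,
        integral_integral_max_zero (fun x y => k x y * u x y) hs₁ hs₂] using
        hineq s₁ s₂ hs₁ hs₂)
    ht₁ ht₂
  simpa only [max_eq_left ht₁, max_eq_left ht₂, integral_integral_max_zero k ht₁ ht₂] using key

theorem wendroff_real
    (u k : ℝ → ℝ → ℝ) (c : ℝ) (hc : 0 ≤ c)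
    (hu : ContinuousOn (fun w : ℝ × ℝ => u w.1 w.2) (Ici 0 ×ˢ Ici 0))
    (hk : ContinuousOn (fun w : ℝ × ℝ => k w.1 w.2) (Ici 0 ×ˢ Ici 0))
    (hu0 : ∀ t₁ t₂ : ℝ, 0 ≤ t₁ → 0 ≤ t₂ → 0 ≤ u t₁ t₂)
    (hk0 : ∀ t₁ t₂ : ℝ, 0 ≤ t₁ → 0 ≤ t₂ → 0 ≤ k t₁ t₂)
    (hineq : ∀ t₁ t₂ : ℝ, 0 ≤ t₁ → 0 ≤ t₂ →
      u t₁ t₂ ≤ c + ∫ s₁ in (0:ℝ)..t₁, ∫ s₂ in (0:ℝ)..t₂, k s₁ s₂ * u s₁ s₂) :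
    ∀ t₁ t₂ : ℝ, 0 ≤ t₁ → 0 ≤ t₂ →
      u t₁ t₂ ≤ c * Real.exp (∫ s₁ in (0:ℝ)..t₁, ∫ s₂ in (0:ℝ)..t₂, k s₁ s₂) :=
  wendroff_real_general u k c hu hk hu0 hk0 hineq
end
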